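/- arXiv:1511.04655 — 8 statements merged into one kernel-verified Lean document; each statement's English description precedes it below -/
import Mathlib

section
/- Let a be a rational number, let r ≥ 0 be an integer, and for i ∈ {1,2} let G_i be a graph with n_i vertices such that the total number of cliques in G_i (including the empty clique) equals a(n_i - r) + 2^r. Let G be a graph obtained by pasting G_1 and G_2 on an r-clique. Then G has n = n_1 + n_2 - r vertices and the total number of cliques in G equals a(n - r) + 2^r. -/
/-!
A clique of the pasted graph cannot meet both `A \ B` and `B \ A`, so every clique of `G` lies
in `A` or in `B`, and the cliques lying in both are exactly the `2 ^ r` subsets of the clique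
`A ∩ B`. Inclusion–exclusion gives `count G + 2 ^ r = count G₁ + count G₂`, and the affine form
`a (n - r) + 2 ^ r` survives because `n - r = (n₁ - r) + (n₂ - r)`.
-/

/-- The total number of cliques of `G` (including the empty clique). -/
noncomputable def SimpleGraph.totalCliqueCount {V : Type*} (G : SimpleGraph V) : ℕ :=
  {s : Finset V | G.IsClique (s : Set V)}.ncard

open Finset

namespace SimpleGraph

variable {V : Type*} [DecidableEq V] (G : SimpleGraph V) [DecidableRel G.Adj]

def cliquesIn (s : Finset V) : Finset (Finset V) :=
  {t ∈ s.powerset | G.IsClique (t : Set V)}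

variable {G}

@[simp]
theorem mem_cliquesIn {s t : Finset V} : t ∈ G.cliquesIn s ↔ t ⊆ s ∧ G.IsClique (t : Set V) := by
  simp [cliquesIn]

@[simp]
theorem coe_cliquesIn (s : Finset V) :
    (G.cliquesIn s : Set (Finset V)) = {t | t ⊆ s ∧ G.IsClique (t : Set V)} := by
  ext; simp

theorem cliquesIn_inter (s t : Finset V) :
    G.cliquesIn (s ∩ t) = G.cliquesIn s ∩ G.cliquesIn t := by
  ext u
  simp only [mem_cliquesIn, mem_inter, subset_inter_iff]
  tauto

theorem IsClique.cliquesIn_eq_powerset {s : Finset V} (hs : G.IsClique (s : Set V)) :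
    G.cliquesIn s = s.powerset := by
  ext t
  simpa using fun ht => hs.subset (coe_subset.2 ht)

theorem cliquesIn_union {s t : Finset V} (hst : ∀ u ∈ s \ t, ∀ v ∈ t \ s, ¬ G.Adj u v) :
    G.cliquesIn (s ∪ t) = G.cliquesIn s ∪ G.cliquesIn t := by
  ext c
  simp only [mem_cliquesIn, mem_union]
  constructor
  · rintro ⟨hc, hclique⟩
    by_contra! h
    obtain ⟨u, huc, hus⟩ := not_subset.1 (fun hcs => h.1 hcs hclique)
    obtain ⟨v, hvc, hvt⟩ := not_subset.1 (fun hct => h.2 hct hclique)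
    have hut : u ∈ t := (mem_union.1 (hc huc)).resolve_left hus
    have hvs : v ∈ s := (mem_union.1 (hc hvc)).resolve_right hvt
    exact hst v (mem_sdiff.2 ⟨hvs, hvt⟩) u (mem_sdiff.2 ⟨hut, hus⟩)
      (hclique hvc huc (by rintro rfl; exact hus hvs))
  · rintro (⟨hc, hclique⟩ | ⟨hc, hclique⟩)
    · exact ⟨hc.trans subset_union_left, hclique⟩
    · exact ⟨hc.trans subset_union_right, hclique⟩

theorem card_cliquesIn_union_add_two_pow {s t : Finset V}
    (hst : ∀ u ∈ s \ t, ∀ v ∈ t \ s, ¬ G.Adj u v) (hclique : G.IsClique (↑(s ∩ t) : Set V)) :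
    #(G.cliquesIn (s ∪ t)) + 2 ^ #(s ∩ t) = #(G.cliquesIn s) + #(G.cliquesIn t) := by
  rw [cliquesIn_union hst, ← card_powerset, ← hclique.cliquesIn_eq_powerset, cliquesIn_inter,
    card_union_add_card_inter]

theorem totalCliqueCount_eq_card_cliquesIn_univ [Fintype V] :
    G.totalCliqueCount = #(G.cliquesIn univ) := by
  rw [totalCliqueCount, ← Set.ncard_coe_finset]
  congr 1
  ext t
  simp

theorem totalCliqueCount_induce (s : Finset V) :
    (G.induce (s : Set V)).totalCliqueCount = #(G.cliquesIn s) := by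
  unfold totalCliqueCount
  refine (Set.ncard_image_of_injective _ (Finset.map_injective (.subtype _))).symm.trans ?_
  rw [← Set.ncard_coe_finset, coe_cliquesIn]
  congr 1
  ext t
  have coe_map_subtype (u : Finset (s : Set V)) :
      ((u.map (.subtype _) : Finset V) : Set V) = Subtype.val '' (u : Set (s : Set V)) :=
    coe_map _ _
  simp only [Set.mem_image, Set.mem_ofPred, isClique_induce_iff, ← coe_map_subtype]
  constructor
  · rintro ⟨u, hu, rfl⟩
    exact ⟨fun x hx => u.property_of_mem_map_subtype hx, hu⟩
  · rintro ⟨hts, ht⟩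
    have hmap := subtype_map_of_mem (p := (· ∈ (s : Set V))) hts
    exact ⟨_, by rwa [hmap], hmap⟩

end SimpleGraph

/-- If `G` is obtained by pasting `G₁` and `G₂` on an `r`-clique (here `G₁` and `G₂` are
the subgraphs of `G` induced on `A` and `B`, where `A ∪ B` is everything, `A ∩ B` is an
`r`-clique, and there are no edges between `A \ B` and `B \ A`), and each `Gᵢ` on `nᵢ`
vertices has exactly `a(nᵢ - r) + 2^r` cliques in total, then `G` has `n = n₁ + n₂ - r`
vertices and exactly `a(n - r) + 2^r` cliques in total. -/
theorem totalCliqueCount_paste (a : ℚ) (r : ℕ)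
    (V : Type) [Fintype V] [DecidableEq V] (G : SimpleGraph V)
    (A B : Finset V) (n₁ n₂ : ℕ) (hn₁ : A.card = n₁) (hn₂ : B.card = n₂)
    (hunion : A ∪ B = Finset.univ) (hcard : (A ∩ B).card = r)
    (hclique : G.IsClique (↑(A ∩ B) : Set V))
    (hcross : ∀ u ∈ A \ B, ∀ v ∈ B \ A, ¬ G.Adj u v)
    (h₁ : ((G.induce (↑A : Set V)).totalCliqueCount : ℚ) = a * ((n₁ : ℚ) - r) + 2 ^ r)
    (h₂ : ((G.induce (↑B : Set V)).totalCliqueCount : ℚ) = a * ((n₂ : ℚ) - r) + 2 ^ r) :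
    Fintype.card V = n₁ + n₂ - r ∧
    (G.totalCliqueCount : ℚ) = a * ((Fintype.card V : ℚ) - r) + 2 ^ r := by
  classical
  have hcount := G.card_cliquesIn_union_add_two_pow hcross hclique
  rw [hunion, hcard, ← G.totalCliqueCount_eq_card_cliquesIn_univ, ← G.totalCliqueCount_induce,
    ← G.totalCliqueCount_induce] at hcount
  have hcardV : Fintype.card V + r = n₁ + n₂ := by
    rw [← hn₁, ← hn₂, ← hcard, ← card_union_add_card_inter, hunion, card_univ]
  refine ⟨by omega, ?_⟩
  have hcardV' : (Fintype.card V : ℚ) = n₁ + n₂ - r := eq_sub_of_add_eq (by exact_mod_cast hcardV)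
  have hcount' := congrArg ((↑) : ℕ → ℚ) hcount
  push_cast at hcount'
  rw [hcardV']
  linarith
end

section
/- For every integer c ≥ 1, every (K_{c×2}, c)-cockade G on n vertices, and every integer k with 0 ≤ k ≤ c, the number of k-cliques in G equals (1/c) · C(c,k) · (2^k - 1) · (n - c) + C(c,k). -/
/-- The number of `k`-cliques of `G`. -/
noncomputable def SimpleGraph.cliqueCount {V : Type*} (G : SimpleGraph V) (k : ℕ) : ℕ :=
  {s : Finset V | G.IsNClique k s}.ncard

/-- An `(H, r)`-cockade: either a copy of `H`, or obtained by pasting two smaller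
`(H, r)`-cockades on an `r`-clique (the pasted parts cover the graph, intersect in an
`r`-clique, and have no edges between their proper parts). -/
inductive SimpleGraph.IsCockade {W : Type} (H : SimpleGraph W) (r : ℕ) :
    {V : Type} → SimpleGraph V → Prop
  | base {V : Type} (G : SimpleGraph V) : Nonempty (G ≃g H) → SimpleGraph.IsCockade H r G
  | paste {V : Type} (G : SimpleGraph V) (A B : Set V)
      (hunion : A ∪ B = Set.univ) (hcard : (A ∩ B).ncard = r)
      (hclique : G.IsClique (A ∩ B))
      (hcross : ∀ u ∈ A \ B, ∀ v ∈ B \ A, ¬ G.Adj u v)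
      (h₁ : SimpleGraph.IsCockade H r (G.induce A))
      (h₂ : SimpleGraph.IsCockade H r (G.induce B)) : SimpleGraph.IsCockade H r G

/-- `K_{c×2}`, the complete `c`-partite graph with all parts of size 2. -/
def Kc2 (c : ℕ) : SimpleGraph (Σ _ : Fin c, Fin 2) :=
  SimpleGraph.completeMultipartiteGraph fun _ : Fin c => Fin 2


open SimpleGraph Finset

lemma kc2_adj (c : ℕ) (u v : Σ _ : Fin c, Fin 2) : (Kc2 c).Adj u v ↔ u.1 ≠ v.1 := Iff.rfl

lemma kc2_clique_iff (c : ℕ) (s : Finset (Σ _ : Fin c, Fin 2)) :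
    (Kc2 c).IsClique (↑s : Set (Σ _ : Fin c, Fin 2)) ↔ Set.InjOn Sigma.fst (↑s : Set (Σ _ : Fin c, Fin 2)) := by
  constructor
  · intro h u hu v hv huv
    by_contra hne
    exact (h hu hv hne) huv
  · intro h u hu v hv hne
    exact fun h1 => hne (h hu hv h1)

lemma kc2_cliqueCount (c k : ℕ) : (Kc2 c).cliqueCount k = c.choose k * 2 ^ k := by
  classical
  have hset : {s : Finset (Σ _ : Fin c, Fin 2) | (Kc2 c).IsNClique k s} =
      ↑(univ.filter (fun s => (Kc2 c).IsNClique k s)) := by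
    ext s; simp
  rw [SimpleGraph.cliqueCount, hset, Set.ncard_coe_finset]
  set T := univ.filter (fun s => (Kc2 c).IsNClique k s) with hT
  have hmem : ∀ s ∈ T, s.image Sigma.fst ∈ univ.powersetCard k := by
    intro s hs
    rw [hT, mem_filter] at hs
    obtain ⟨-, hcl, hcard⟩ := hs
    rw [mem_powersetCard_univ, card_image_of_injOn ((kc2_clique_iff c s).mp hcl), hcard]
  rw [card_eq_sum_card_fiberwise hmem]
  have hfib : ∀ S ∈ univ.powersetCard k,
      (T.filter (fun s => s.image Sigma.fst = S)).card = 2 ^ k := by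
    intro S hS
    rw [mem_powersetCard_univ] at hS
    have : (S.pi (fun _ => (univ : Finset (Fin 2)))).card = 2 ^ k := by
      simp [hS]
    rw [← this]
    apply card_bij' (i := fun s _ => fun a _ => if (⟨a, 0⟩ : Σ _ : Fin c, Fin 2) ∈ s then 0 else 1)
      (j := fun f _ => S.attach.image (fun a => ⟨a.1, f a.1 a.2⟩))
    · intro s hs; simp [Finset.mem_pi]
    · -- j maps into fiber
      intro f hf
      simp only [mem_filter, hT, mem_univ, true_and]
      have himg : (S.attach.image (fun a => (⟨a.1, f a.1 a.2⟩ : Σ _ : Fin c, Fin 2))).image Sigma.fst = S := by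
        ext a
        simp only [Finset.image_image, Finset.mem_image, mem_attach, true_and, Subtype.exists]
        constructor
        · rintro ⟨b, hb, rfl⟩; exact hb
        · intro ha; exact ⟨a, ha, rfl⟩
      have hinj : Set.InjOn Sigma.fst (↑(S.attach.image (fun a => (⟨a.1, f a.1 a.2⟩ : Σ _ : Fin c, Fin 2))) : Set (Σ _ : Fin c, Fin 2)) := by
        intro u hu v hv huv
        simp only [Finset.coe_image, Set.mem_image, Finset.mem_coe, mem_attach, true_and,
          Set.mem_setOf_eq] at hu hv
        obtain ⟨a, -, rfl⟩ := hu
        obtain ⟨b, -, rfl⟩ := hv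
        simp only at huv
        have : a = b := Subtype.ext huv
        subst this
        rfl
      constructor
      · constructor
        · exact (kc2_clique_iff _ _).mpr hinj
        · rw [Finset.card_image_of_injOn, Finset.card_attach, hS]
          intro u hu v hv huv
          have : u.1 = v.1 := congrArg Sigma.fst huv
          exact Subtype.ext this
      · exact himg
    ·
      intro s hs
      -- goal : j (i s) = s
      simp only [mem_filter, hT, mem_univ, true_and] at hs
      obtain ⟨⟨hcl, hcard⟩, himg⟩ := hs
      have hinj := (kc2_clique_iff c s).mp hcl
      apply Finset.eq_of_subset_of_card_le
      · intro x hx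
        simp only [Finset.mem_image, mem_attach, true_and, Subtype.exists] at hx
        obtain ⟨a, ha, rfl⟩ := hx
        have ha' : a ∈ s.image Sigma.fst := by rw [himg]; exact ha
        rw [Finset.mem_image] at ha'
        obtain ⟨x, hx, rfl⟩ := ha'
        by_cases h0 : (⟨x.1, 0⟩ : Σ _ : Fin c, Fin 2) ∈ s
        · simpa [h0] using h0
        · have : x.2 = 1 := by
            have h2 : x.2 ≠ 0 := by
              intro h; apply h0; rw [← h]; exact hx
            omega
          have hx1 : x = ⟨x.1, 1⟩ := by rw [← this]
          rw [if_neg h0, ← hx1]; exact hx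
      · rw [hcard, Finset.card_image_of_injOn, Finset.card_attach, hS]
        intro u hu v hv huv
        exact Subtype.ext (congrArg Sigma.fst huv)
    · -- i (j f) = f
      intro f hf
      funext a ha
      have hmem0 : ((⟨a, 0⟩ : Σ _ : Fin c, Fin 2) ∈ S.attach.image (fun b => (⟨b.1, f b.1 b.2⟩ : Σ _ : Fin c, Fin 2))) ↔ f a ha = 0 := by
        simp only [Finset.mem_image, mem_attach, true_and, Subtype.exists]
        constructor
        · rintro ⟨b, hb, h⟩
          obtain ⟨h1, h2⟩ := Sigma.mk.inj_iff.mp h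
          subst h1
          exact eq_of_heq h2
        · intro h; exact ⟨a, ha, by rw [h]⟩
      by_cases h : f a ha = 0
      · simp [hmem0, h]
      · have h1 : f a ha = 1 := by omega
        simp [hmem0, h, h1]
  rw [Finset.sum_congr rfl hfib, Finset.sum_const, Finset.card_powersetCard, Finset.card_univ,
    Fintype.card_fin, smul_eq_mul]


lemma isNClique_map_equiv {α β : Type*} {G : SimpleGraph α} {H : SimpleGraph β} (e : G ≃g H)
    {k : ℕ} {s : Finset α} : H.IsNClique k (s.map e.toEquiv.toEmbedding) ↔ G.IsNClique k s := by
  simp only [SimpleGraph.isNClique_iff, Finset.card_map, and_congr_left_iff]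
  intro _
  constructor
  · intro h a ha b hb hab
    have := h (Finset.mem_map_of_mem _ ha) (Finset.mem_map_of_mem _ hb)
      (by simpa using fun h' => hab (e.toEquiv.injective h'))
    exact e.map_adj_iff.mp (by simpa using this)
  · intro h a ha b hb hab
    simp only [Finset.coe_map, Set.mem_image, Finset.mem_coe] at ha hb
    obtain ⟨a, ha, rfl⟩ := ha
    obtain ⟨b, hb, rfl⟩ := hb
    exact e.map_adj_iff.mpr (h ha hb (fun h' => hab (by rw [h'])))

lemma cliqueCount_congr {α β : Type*} {G : SimpleGraph α} {H : SimpleGraph β} (e : G ≃g H)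
    (k : ℕ) : G.cliqueCount k = H.cliqueCount k := by
  unfold SimpleGraph.cliqueCount
  have himg : {s : Finset β | H.IsNClique k s} =
      (fun s : Finset α => s.map e.toEquiv.toEmbedding) '' {s | G.IsNClique k s} := by
    ext t
    simp only [Set.mem_image, Set.mem_setOf_eq]
    constructor
    · intro ht
      refine ⟨t.map e.symm.toEquiv.toEmbedding, ?_, ?_⟩
      all_goals
        have h3 : e.symm.toEquiv.toEmbedding.trans e.toEquiv.toEmbedding =
            Function.Embedding.refl β := by ext x; simp
      · rw [← isNClique_map_equiv e, Finset.map_map, h3, Finset.map_refl]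
        exact ht
      · rw [Finset.map_map, h3, Finset.map_refl]
    · rintro ⟨s, hs, rfl⟩
      exact (isNClique_map_equiv e).mpr hs
  rw [himg, Set.ncard_image_of_injective _ (Finset.map_injective _)]

lemma ncard_cliques_subset {V : Type} (G : SimpleGraph V) (A : Set V) (k : ℕ) :
    {s : Finset V | G.IsNClique k s ∧ ↑s ⊆ A}.ncard = (G.induce A).cliqueCount k := by
  classical
  unfold SimpleGraph.cliqueCount
  have himg : {s : Finset V | G.IsNClique k s ∧ ↑s ⊆ A} =
      (fun t : Finset A => t.map (Function.Embedding.subtype _)) ''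
        {t : Finset A | (G.induce A).IsNClique k t} := by
    ext s
    simp only [Set.mem_image, Set.mem_setOf_eq]
    constructor
    · rintro ⟨⟨hcl, hcard⟩, hsub⟩
      refine ⟨s.subtype (· ∈ A), ⟨?_, ?_⟩, ?_⟩
      · intro u hu v hv huv
        simp only [Finset.mem_coe, Finset.mem_subtype] at hu hv
        exact hcl hu hv (fun h => huv (Subtype.ext h))
      · rw [← Finset.card_map (Function.Embedding.subtype _), Finset.subtype_map,
          Finset.filter_true_of_mem (fun x hx => hsub hx), hcard]
      · rw [Finset.subtype_map, Finset.filter_true_of_mem (fun x hx => hsub hx)]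
    · rintro ⟨t, ⟨hcl, hcard⟩, rfl⟩
      refine ⟨⟨?_, by simp [hcard]⟩, ?_⟩
      · intro u hu v hv huv
        simp only [Finset.coe_map, Set.mem_image, Finset.mem_coe,
          Function.Embedding.coe_subtype] at hu hv
        obtain ⟨u, hu, rfl⟩ := hu
        obtain ⟨v, hv, rfl⟩ := hv
        exact hcl hu hv (fun h => huv (by rw [h]))
      · intro x hx
        simp only [Finset.coe_map, Set.mem_image, Finset.mem_coe,
          Function.Embedding.coe_subtype] at hx
        obtain ⟨u, _, rfl⟩ := hx
        exact u.2
  rw [himg, Set.ncard_image_of_injective _ (Finset.map_injective _)]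

lemma ncard_cliques_in_clique {V : Type} (G : SimpleGraph V) (C : Set V) (hC : C.Finite)
    (hcl : G.IsClique C) (k : ℕ) :
    {s : Finset V | G.IsNClique k s ∧ ↑s ⊆ C}.ncard = (C.ncard).choose k := by
  classical
  have : {s : Finset V | G.IsNClique k s ∧ ↑s ⊆ C} = ↑(hC.toFinset.powersetCard k) := by
    ext s
    simp only [Set.mem_setOf_eq, Finset.mem_coe, Finset.mem_powersetCard]
    constructor
    · rintro ⟨⟨-, hcard⟩, hsub⟩
      exact ⟨fun x hx => hC.mem_toFinset.mpr (hsub hx), hcard⟩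
    · rintro ⟨hsub, hcard⟩
      have hsub' : ↑s ⊆ C := fun x hx => hC.mem_toFinset.mp (hsub hx)
      exact ⟨⟨hcl.subset hsub', hcard⟩, hsub'⟩
  rw [this, Set.ncard_coe_finset, Finset.card_powersetCard, Set.ncard_eq_toFinset_card _ hC]

lemma clique_subset_or {V : Type} (G : SimpleGraph V) (A B : Set V)
    (hunion : A ∪ B = Set.univ)
    (hcross : ∀ u ∈ A \ B, ∀ v ∈ B \ A, ¬ G.Adj u v) {k : ℕ} {s : Finset V}
    (hs : G.IsNClique k s) : ↑s ⊆ A ∨ ↑s ⊆ B := by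
  by_contra h
  push_neg at h
  obtain ⟨hA, hB⟩ := h
  obtain ⟨u, hu, huA⟩ := Set.not_subset.mp hA
  obtain ⟨v, hv, hvB⟩ := Set.not_subset.mp hB
  have huB : u ∈ B := by
    have : u ∈ A ∪ B := by rw [hunion]; trivial
    exact this.resolve_left huA
  have hvA : v ∈ A := by
    have : v ∈ A ∪ B := by rw [hunion]; trivial
    exact this.resolve_right hvB
  have hne : v ≠ u := fun h => huA (h ▸ hvA)
  exact hcross v ⟨hvA, hvB⟩ u ⟨huB, huA⟩ (hs.1 hv hu hne)

lemma paste_count {V : Type} [Fintype V] (G : SimpleGraph V) (A B : Set V)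
    (hunion : A ∪ B = Set.univ) (hclique : G.IsClique (A ∩ B))
    (hcross : ∀ u ∈ A \ B, ∀ v ∈ B \ A, ¬ G.Adj u v) (k : ℕ) :
    G.cliqueCount k + ((A ∩ B).ncard).choose k =
      (G.induce A).cliqueCount k + (G.induce B).cliqueCount k := by
  classical
  set SA := {s : Finset V | G.IsNClique k s ∧ ↑s ⊆ A} with hSA
  set SB := {s : Finset V | G.IsNClique k s ∧ ↑s ⊆ B} with hSB
  have hU : SA ∪ SB = {s : Finset V | G.IsNClique k s} := by
    ext s
    simp only [hSA, hSB, Set.mem_union, Set.mem_setOf_eq]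
    constructor
    · rintro (⟨h, -⟩ | ⟨h, -⟩) <;> exact h
    · intro h
      rcases clique_subset_or G A B hunion hcross h with h' | h'
      · exact Or.inl ⟨h, h'⟩
      · exact Or.inr ⟨h, h'⟩
  have hI : SA ∩ SB = {s : Finset V | G.IsNClique k s ∧ ↑s ⊆ A ∩ B} := by
    ext s
    simp only [hSA, hSB, Set.mem_inter_iff, Set.mem_setOf_eq, Set.subset_inter_iff]
    tauto
  have key := Set.ncard_union_add_ncard_inter SA SB (Set.toFinite _) (Set.toFinite _)
  rw [hU, hI, ncard_cliques_in_clique G (A ∩ B) ((A.toFinite).inter_of_left B) hclique k] at key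
  rw [← ncard_cliques_subset G A k, ← ncard_cliques_subset G B k]
  exact key

lemma cockade_aux (c k : ℕ) (hc : 1 ≤ c) (hk : k ≤ c) :
    ∀ {V : Type} (G : SimpleGraph V), (Kc2 c).IsCockade c G →
    ∀ (_ : Fintype V), (G.cliqueCount k : ℚ) =
      (1 / (c : ℚ)) * (c.choose k : ℚ) * ((2 : ℚ) ^ k - 1) * ((Fintype.card V : ℚ) - c)
        + (c.choose k : ℚ) := by
  intro V0 G0 hG
  induction hG with
  | @base V G h =>
    intro inst
    obtain ⟨e⟩ := h
    have hcard : Fintype.card V = 2 * c := by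
      rw [Fintype.card_congr e.toEquiv]
      simp [mul_comm]
    rw [cliqueCount_congr e, kc2_cliqueCount, hcard]
    have hc0 : (c : ℚ) ≠ 0 := by positivity
    push_cast
    field_simp
    ring
  | @paste V G A B hunion hcard hclique hcross h1 h2 ihA ihB =>
    intro inst
    classical
    haveI instA : Fintype ↥A := A.toFinite.fintype
    haveI instB : Fintype ↥B := B.toFinite.fintype
    have hA := ihA instA
    have hB := ihB instB
    have hcnt := paste_count G A B hunion hclique hcross k
    rw [hcard] at hcnt
    have hncA : A.ncard = Fintype.card ↥A := by
      rw [← Nat.card_coe_set_eq, Nat.card_eq_fintype_card]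
    have hncB : B.ncard = Fintype.card ↥B := by
      rw [← Nat.card_coe_set_eq, Nat.card_eq_fintype_card]
    have hab : (Fintype.card ↥A : ℚ) + (Fintype.card ↥B : ℚ) = (Fintype.card V : ℚ) + c := by
      have h := Set.ncard_union_add_ncard_inter A B A.toFinite B.toFinite
      rw [hunion, hcard, Set.ncard_univ, Nat.card_eq_fintype_card, hncA, hncB] at h
      exact_mod_cast h.symm
    have hqc : (G.cliqueCount k : ℚ) + (c.choose k : ℚ) =
        ((G.induce A).cliqueCount k : ℚ) + ((G.induce B).cliqueCount k : ℚ) := by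
      exact_mod_cast hcnt
    rw [hA, hB] at hqc
    linear_combination hqc + ((1 / (c : ℚ)) * (c.choose k : ℚ) * ((2 : ℚ) ^ k - 1)) * hab

/-- In every `(K_{c×2}, c)`-cockade on `n` vertices, for `0 ≤ k ≤ c`, the number of
`k`-cliques equals `(1/c) * C(c,k) * (2^k - 1) * (n - c) + C(c,k)`. -/
theorem cliqueCount_cockade (c : ℕ) (hc : 1 ≤ c)
    (V : Type) [Fintype V] (G : SimpleGraph V) (hG : (Kc2 c).IsCockade c G)
    (n : ℕ) (hn : Fintype.card V = n) (k : ℕ) (hk : k ≤ c) :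
    (G.cliqueCount k : ℚ) =
      (1 / (c : ℚ)) * (c.choose k : ℚ) * ((2 : ℚ) ^ k - 1) * ((n : ℚ) - c)
        + (c.choose k : ℚ) := by
  subst hn
  exact cockade_aux c k hc hk G hG ‹_›
end

section
/- For all integers d ≥ 0 and k ≥ 1, every d-degenerate graph G with n ≥ d+1 vertices has at most C(d, k-1) · (n - (k-1)(d+1)/k) cliques of size k. -/
/-- A graph is `d`-degenerate if every nonempty (induced) subgraph has a vertex of degree
at most `d`. -/
def SimpleGraph.Degenerate {V : Type*} (G : SimpleGraph V) (d : ℕ) : Prop :=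
  ∀ s : Set V, s.Nonempty → ∃ v ∈ s, {u ∈ s | G.Adj v u}.ncard ≤ d

lemma count_le_choose {V : Type} [Fintype V] (G : SimpleGraph V) (k : ℕ) :
    G.cliqueCount k ≤ (Fintype.card V).choose k := by
  classical
  have h : {s : Finset V | G.IsNClique k s} ⊆ ↑((Finset.univ : Finset V).powersetCard k) := by
    intro s hs
    simp only [Set.mem_setOf_eq, Finset.mem_coe, Finset.mem_powersetCard]
    exact ⟨Finset.subset_univ _, hs.card_eq⟩
  calc G.cliqueCount k ≤ (↑((Finset.univ : Finset V).powersetCard k) : Set (Finset V)).ncard :=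
        Set.ncard_le_ncard h (Set.toFinite _)
    _ = ((Finset.univ : Finset V).powersetCard k).card := Set.ncard_coe_finset _
    _ = (Fintype.card V).choose k := by rw [Finset.card_powersetCard, Finset.card_univ]

lemma degenerate_comap {V : Type} [Fintype V] (G : SimpleGraph V) (d : ℕ) (hG : G.Degenerate d)
    (p : V → Prop) : (G.comap (Subtype.val : {u // p u} → V)).Degenerate d := by
  intro s hs
  obtain ⟨w, hw, hcard⟩ := hG (Subtype.val '' s) (hs.image _)
  obtain ⟨w', hw's, rfl⟩ := hw
  refine ⟨w', hw's, ?_⟩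
  have himg : Subtype.val '' {u ∈ s | (G.comap Subtype.val).Adj w' u}
      ⊆ {u ∈ Subtype.val '' s | G.Adj ↑w' u} := by
    rintro _ ⟨u, ⟨hus, hadj⟩, rfl⟩
    exact ⟨⟨u, hus, rfl⟩, hadj⟩
  calc {u ∈ s | (G.comap Subtype.val).Adj w' u}.ncard
      = (Subtype.val '' {u ∈ s | (G.comap Subtype.val).Adj w' u}).ncard :=
        (Set.ncard_image_of_injective _ Subtype.val_injective).symm
    _ ≤ {u ∈ Subtype.val '' s | G.Adj ↑w' u}.ncard := by
        exact Set.ncard_le_ncard himg (Set.toFinite _)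
    _ ≤ d := hcard

lemma count_mem_le {V : Type} [Fintype V] [DecidableEq V] (G : SimpleGraph V) [DecidableRel G.Adj]
    (k d : ℕ) (v : V) (hv : G.degree v ≤ d) :
    {s : Finset V | G.IsNClique k s ∧ v ∈ s}.ncard ≤ d.choose (k - 1) := by
  have hinj : Set.InjOn (fun s : Finset V => s.erase v)
      {s : Finset V | G.IsNClique k s ∧ v ∈ s} := by
    intro s hs t ht h
    simp only [Set.mem_setOf_eq] at hs ht
    simp only at h
    rw [← Finset.insert_erase hs.2, ← Finset.insert_erase ht.2, h]
  have himg : (fun s : Finset V => s.erase v) '' {s : Finset V | G.IsNClique k s ∧ v ∈ s}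
      ⊆ ↑((G.neighborFinset v).powersetCard (k - 1)) := by
    rintro _ ⟨s, ⟨hs, hvs⟩, rfl⟩
    simp only [Finset.mem_coe, Finset.mem_powersetCard]
    constructor
    · intro u hu
      rw [SimpleGraph.mem_neighborFinset]
      exact hs.isClique hvs (Finset.mem_of_mem_erase hu) (Ne.symm (Finset.ne_of_mem_erase hu))
    · rw [Finset.card_erase_of_mem hvs, hs.card_eq]
  calc {s : Finset V | G.IsNClique k s ∧ v ∈ s}.ncard
      = ((fun s : Finset V => s.erase v) '' {s : Finset V | G.IsNClique k s ∧ v ∈ s}).ncard :=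
        (Set.ncard_image_of_injOn hinj).symm
    _ ≤ (↑((G.neighborFinset v).powersetCard (k - 1)) : Set (Finset V)).ncard :=
        Set.ncard_le_ncard himg (Set.toFinite _)
    _ = ((G.neighborFinset v).powersetCard (k - 1)).card := Set.ncard_coe_finset _
    _ = (G.degree v).choose (k - 1) := by
        rw [Finset.card_powersetCard, SimpleGraph.card_neighborFinset_eq_degree]
    _ ≤ d.choose (k - 1) := Nat.choose_le_choose _ hv

lemma count_notMem_le {V : Type} [Fintype V] [DecidableEq V] (G : SimpleGraph V) (k : ℕ) (v : V) :
    {s : Finset V | G.IsNClique k s ∧ v ∉ s}.ncard ≤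
      (G.comap (Subtype.val : {u // u ≠ v} → V)).cliqueCount k := by
  classical
  set g : Finset V → Finset {u // u ≠ v} := fun s => s.subtype (fun u => u ≠ v) with hg
  have hrec : ∀ s : Finset V, v ∉ s → (g s).map (Function.Embedding.subtype _) = s := by
    intro s hvs
    rw [hg, Finset.subtype_map, Finset.filter_eq_self]
    intro u hu h
    exact hvs (h ▸ hu)
  have hinj : Set.InjOn g {s : Finset V | G.IsNClique k s ∧ v ∉ s} := by
    intro s hs t ht h
    rw [← hrec s hs.2, ← hrec t ht.2, h]
  have himg : g '' {s : Finset V | G.IsNClique k s ∧ v ∉ s}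
      ⊆ {s : Finset {u // u ≠ v} | (G.comap (Subtype.val : {u // u ≠ v} → V)).IsNClique k s} := by
    rintro _ ⟨s, ⟨hs, hvs⟩, rfl⟩
    refine ⟨?_, ?_⟩
    · intro a ha b hb hab
      have hne : (a : V) ≠ (b : V) := fun h => hab (Subtype.ext h)
      refine hs.isClique ?_ ?_ hne
      · simpa [hrec s hvs] using Finset.mem_map_of_mem (Function.Embedding.subtype _) ha
      · simpa [hrec s hvs] using Finset.mem_map_of_mem (Function.Embedding.subtype _) hb
    · have h2 : (g s).map (Function.Embedding.subtype _) = s := hrec s hvs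
      calc (g s).card = ((g s).map (Function.Embedding.subtype _)).card :=
            (Finset.card_map _).symm
        _ = s.card := by rw [h2]
        _ = k := hs.card_eq
  calc {s : Finset V | G.IsNClique k s ∧ v ∉ s}.ncard
      = (g '' {s : Finset V | G.IsNClique k s ∧ v ∉ s}).ncard :=
        (Set.ncard_image_of_injOn hinj).symm
    _ ≤ _ := Set.ncard_le_ncard himg (Set.toFinite _)

lemma base_arith (d k : ℕ) (hk : 1 ≤ k) :
    (((d+1).choose k : ℕ) : ℚ) =
      (d.choose (k-1) : ℚ) * (((d:ℚ)+1) - ((k-1:ℕ):ℚ) * ((d:ℚ)+1)/(k:ℚ)) := by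
  have hkq : (k:ℚ) ≠ 0 := Nat.cast_ne_zero.2 (by omega)
  have hnat : (d+1) * d.choose (k-1) = (d+1).choose k * k := by
    have h := Nat.add_one_mul_choose_eq d (k-1)
    have hk1 : k - 1 + 1 = k := by omega
    simp only [Nat.succ_eq_add_one, hk1] at h
    exact h
  have hq : ((d:ℚ)+1) * (d.choose (k-1) : ℚ) = ((d+1).choose k : ℚ) * (k:ℚ) := by
    exact_mod_cast congrArg (Nat.cast : ℕ → ℚ) hnat
  have hk1 : ((k-1:ℕ):ℚ) = (k:ℚ) - 1 := by
    have h1 : (1:ℕ) ≤ k := hk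
    push_cast [Nat.cast_sub h1]
    ring
  rw [hk1]
  field_simp
  nlinarith [hq]

lemma main_aux (d k : ℕ) (hk : 1 ≤ k) : ∀ n : ℕ, d + 1 ≤ n →
    ∀ (V : Type) [Fintype V] (G : SimpleGraph V), G.Degenerate d → Fintype.card V = n →
      (G.cliqueCount k : ℚ) ≤
        (d.choose (k - 1) : ℚ) * ((n : ℚ) - ((k - 1 : ℕ) : ℚ) * ((d : ℚ) + 1) / (k : ℚ)) := by
  intro n hn
  induction n, hn using Nat.le_induction with
  | base =>
    intro V _ G hG hcard
    have h1 : G.cliqueCount k ≤ (d+1).choose k := by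
      have := count_le_choose G k
      rwa [hcard] at this
    calc (G.cliqueCount k : ℚ) ≤ (((d+1).choose k : ℕ) : ℚ) := by exact_mod_cast h1
      _ = (d.choose (k-1) : ℚ) * (((d:ℚ)+1) - ((k-1:ℕ):ℚ) * ((d:ℚ)+1)/(k:ℚ)) := base_arith d k hk
      _ = (d.choose (k-1) : ℚ) * (((d+1:ℕ):ℚ) - ((k-1:ℕ):ℚ) * ((d:ℚ)+1)/(k:ℚ)) := by push_cast; ring
  | succ n hn ih =>
    intro V _ G hG hcard
    classical
    -- find a vertex of degree ≤ d
    have hne : Nonempty V := by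
      rw [← Fintype.card_pos_iff, hcard]; omega
    obtain ⟨v, -, hv⟩ := hG Set.univ (Set.univ_nonempty)
    have hdeg : G.degree v ≤ d := by
      have hset : {u ∈ Set.univ | G.Adj v u} = G.neighborSet v := by
        ext u; simp [SimpleGraph.neighborSet]
      rw [hset] at hv
      rwa [← SimpleGraph.card_neighborFinset_eq_degree, ← Set.ncard_coe_finset,
        SimpleGraph.neighborFinset, Set.coe_toFinset]
    -- the subgraph on the other vertices
    have hcard' : Fintype.card {u // u ≠ v} = n := by
      rw [Fintype.card_subtype_compl, Fintype.card_subtype_eq, hcard]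
      omega
    set G' := G.comap (Subtype.val : {u // u ≠ v} → V) with hG'
    have hB := count_notMem_le G k v
    have hA := count_mem_le G k d v hdeg
    have hIH : (G'.cliqueCount k : ℚ) ≤
        (d.choose (k - 1) : ℚ) * ((n : ℚ) - ((k - 1 : ℕ) : ℚ) * ((d : ℚ) + 1) / (k : ℚ)) :=
      ih {u // u ≠ v} G' (degenerate_comap G d hG _) hcard'
    -- split the clique count
    have hsplit : G.cliqueCount k =
        {s : Finset V | G.IsNClique k s ∧ v ∈ s}.ncard +
        {s : Finset V | G.IsNClique k s ∧ v ∉ s}.ncard := by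
      rw [SimpleGraph.cliqueCount]
      have hu : {s : Finset V | G.IsNClique k s} =
          {s : Finset V | G.IsNClique k s ∧ v ∈ s} ∪ {s : Finset V | G.IsNClique k s ∧ v ∉ s} := by
        ext s; simp only [Set.mem_setOf_eq, Set.mem_union]; tauto
      rw [hu, Set.ncard_union_eq ?_ (Set.toFinite _) (Set.toFinite _)]
      rw [Set.disjoint_left]
      rintro s ⟨-, h1⟩ ⟨-, h2⟩
      exact h2 h1
    have htot : (G.cliqueCount k : ℚ) ≤ (d.choose (k-1) : ℚ) + (G'.cliqueCount k : ℚ) := by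
      rw [hsplit]
      push_cast
      have hA' : ({s : Finset V | G.IsNClique k s ∧ v ∈ s}.ncard : ℚ) ≤ (d.choose (k-1) : ℚ) := by
        exact_mod_cast hA
      have hB' : ({s : Finset V | G.IsNClique k s ∧ v ∉ s}.ncard : ℚ) ≤ (G'.cliqueCount k : ℚ) := by
        exact_mod_cast hB
      linarith
    have hfinal : (d.choose (k-1) : ℚ) + (d.choose (k - 1) : ℚ) *
        ((n : ℚ) - ((k - 1 : ℕ) : ℚ) * ((d : ℚ) + 1) / (k : ℚ)) =
        (d.choose (k-1) : ℚ) * (((n+1 : ℕ) : ℚ) - ((k - 1 : ℕ) : ℚ) * ((d : ℚ) + 1) / (k : ℚ)) := by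
      push_cast
      ring
    linarith

/-- Every `d`-degenerate graph with `n ≥ d + 1` vertices has at most
`C(d, k-1) * (n - (k-1)(d+1)/k)` cliques of size `k ≥ 1`. -/
theorem cliqueCount_le_of_degenerate (d k : ℕ) (hk : 1 ≤ k)
    (V : Type) [Fintype V] (G : SimpleGraph V) (hG : G.Degenerate d)
    (n : ℕ) (hn : Fintype.card V = n) (hnd : d + 1 ≤ n) :
    (G.cliqueCount k : ℚ) ≤
      (d.choose (k - 1) : ℚ) * ((n : ℚ) - ((k - 1 : ℕ) : ℚ) * ((d : ℚ) + 1) / (k : ℚ)) :=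
  main_aux d k hk n hnd V G hG hn
end

section
/- For all integers t ≥ 2 and n ≥ t-1, the maximum number of (t-1)-cliques in an n-vertex graph with no K_t-minor equals n - t + 2. -/
/-!
Upper bound, by strong induction on a vertex set `W`: if `W` contains two distinct `k`-cliques
`A` and `B`, pick `b ∈ B \ A` and let `C` be the component of `b` in `W \ A`. Were every vertex of
`A` adjacent to `C`, the singletons of `A` together with `C` would be the branch sets of a
`K_{k+1}` minor. So some `a₀ ∈ A` has no neighbour in `C`, and every `k`-clique of `W` lies in
`W \ C` or in `C ∪ (A \ {a₀})`; both sets are smaller than `W`, and the two bounds add up to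
`|W| + 1 - k`.

The bound is attained by `K_{t-2}` joined to an independent set of `n - t + 2` vertices: at most
`t - 2` branch sets meet the clique, and two branch sets inside the independent set cannot be
adjacent.
-/

/-- `G` has a complete graph `K_t` as a minor: there are `t` pairwise-disjoint nonempty
branch sets, each inducing a connected subgraph, with an edge of `G` between any two. -/
def SimpleGraph.HasCompleteMinor {V : Type*} (G : SimpleGraph V) (t : ℕ) : Prop :=
  ∃ B : Fin t → Set V,
    (∀ i, (B i).Nonempty) ∧
    (∀ i, (G.induce (B i)).Connected) ∧
    (Pairwise fun i j => Disjoint (B i) (B j)) ∧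
    (Pairwise fun i j => ∃ u ∈ B i, ∃ v ∈ B j, G.Adj u v)

open Finset

namespace SimpleGraph

variable {V : Type*} (G : SimpleGraph V)

def componentWithin (s : Set V) (b : V) : Set V :=
  {v | ∃ p : G.Walk b v, ∀ x ∈ p.support, x ∈ s}

def cliqueSetIn (k : ℕ) (W : Set V) : Set (Finset V) :=
  {A ∈ G.cliqueSet k | ↑A ⊆ W}

variable {G} {s : Set V} {b : V}

theorem componentWithin_subset : G.componentWithin s b ⊆ s :=
  fun _ ⟨p, hp⟩ => hp _ p.end_mem_support

theorem mem_componentWithin_self (hb : b ∈ s) : b ∈ G.componentWithin s b :=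
  ⟨.nil, by simpa using hb⟩

theorem mem_componentWithin_of_adj {v w : V} (hv : v ∈ G.componentWithin s b) (hw : w ∈ s)
    (hvw : G.Adj v w) : w ∈ G.componentWithin s b := by
  obtain ⟨p, hp⟩ := hv
  refine ⟨p.concat hvw, fun x hx => ?_⟩
  rw [Walk.support_concat, List.mem_append, List.mem_singleton] at hx
  rcases hx with hx | rfl
  exacts [hp x hx, hw]

theorem connected_induce_componentWithin (hb : b ∈ s) :
    (G.induce (G.componentWithin s b)).Connected := by
  classical
  refine induce_connected_of_patches b (mem_componentWithin_self hb) fun {v} ⟨p, hp⟩ => ?_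
  refine ⟨{x | x ∈ p.support}, fun x hx => ?_, p.start_mem_support, p.end_mem_support,
    (p.connected_induce_support).preconnected _ _⟩
  exact ⟨p.takeUntil x hx, fun y hy => hp y (p.support_takeUntil_subset_support hx hy)⟩

@[simp]
theorem cliqueSetIn_univ (k : ℕ) : G.cliqueSetIn k Set.univ = G.cliqueSet k := by
  ext; simp [cliqueSetIn]

theorem le_ncard_of_mem_cliqueSetIn [Finite V] {k : ℕ} {W : Set V} {A : Finset V}
    (hA : A ∈ G.cliqueSetIn k W) : k ≤ W.ncard := by
  rw [← hA.1.card_eq, ← Set.ncard_coe_finset]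
  exact Set.ncard_le_ncard hA.2

/-- A clique of `W` meeting `C` lies in `C` together with the neighbours of `C` in `W`. -/
theorem cliqueSetIn_subset_union {k : ℕ} {W C S : Set V}
    (hCS : ∀ v ∈ W, ∀ c ∈ C, G.Adj v c → v ∈ C ∪ S) :
    G.cliqueSetIn k W ⊆ G.cliqueSetIn k (C ∪ S) ∪ G.cliqueSetIn k (W \ C) := by
  rintro A ⟨hA, hAW⟩
  by_cases hAC : ∃ c ∈ A, c ∈ C
  · obtain ⟨c, hcA, hcC⟩ := hAC
    refine Or.inl ⟨hA, fun v hv => ?_⟩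
    obtain rfl | hvc := eq_or_ne v c
    · exact Or.inl hcC
    · exact hCS v (hAW hv) c hcC (hA.1 hv hcA hvc)
  · push Not at hAC
    exact Or.inr ⟨hA, fun v hv => ⟨hAW hv, hAC v hv⟩⟩

theorem hasCompleteMinor_succ_of_isNClique {k : ℕ} {A : Finset V} {C : Set V}
    (hA : G.IsNClique k A) (hC : (G.induce C).Connected) (hAC : Disjoint (A : Set V) C)
    (hadj : ∀ a ∈ A, ∃ c ∈ C, G.Adj a c) : G.HasCompleteMinor (k + 1) := by
  let f : Fin k → V := fun i => (A.equivFinOfCardEq hA.card_eq).symm i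
  have hfA (i : Fin k) : f i ∈ A := ((A.equivFinOfCardEq hA.card_eq).symm i).2
  have hf : Function.Injective f := Subtype.val_injective.comp (Equiv.injective _)
  obtain ⟨B, hBC, hBf⟩ :
      ∃ B : Fin (k + 1) → Set V, B (Fin.last k) = C ∧ ∀ i, B i.castSucc = {f i} :=
    ⟨Fin.lastCases C fun i => {f i}, by simp, by simp⟩
  refine ⟨B, fun i => ?_, fun i => ?_, fun i j hij => ?_, fun i j hij => ?_⟩
  · induction i using Fin.lastCases
    · rw [hBC]; exact Set.nonempty_coe_sort.mp hC.nonempty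
    · rw [hBf]; exact Set.singleton_nonempty _
  · induction i using Fin.lastCases
    · rwa [hBC]
    · rw [hBf]; exact Connected.of_subsingleton
  · induction i using Fin.lastCases <;> induction j using Fin.lastCases
    case last.last => exact absurd rfl hij
    case last.cast j =>
      rw [hBC, hBf]
      exact Set.disjoint_singleton_right.2 (Set.disjoint_left.1 hAC (hfA j))
    case cast.last i =>
      rw [hBC, hBf]
      exact Set.disjoint_singleton_left.2 (Set.disjoint_left.1 hAC (hfA i))
    case cast.cast i j =>
      rw [hBf, hBf]
      exact Set.disjoint_singleton.2 (hf.ne fun h => hij (h ▸ rfl))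
  · induction i using Fin.lastCases <;> induction j using Fin.lastCases
    case last.last => exact absurd rfl hij
    case last.cast j =>
      obtain ⟨c, hc, h⟩ := hadj _ (hfA j)
      rw [hBC, hBf]
      exact ⟨c, hc, f j, rfl, h.symm⟩
    case cast.last i =>
      obtain ⟨c, hc, h⟩ := hadj _ (hfA i)
      rw [hBC, hBf]
      exact ⟨f i, rfl, c, hc, h⟩
    case cast.cast i j =>
      rw [hBf, hBf]
      exact ⟨f i, rfl, f j, rfl, hA.1 (hfA i) (hfA j) (hf.ne fun h => hij (h ▸ rfl))⟩

theorem exists_separation_of_not_hasCompleteMinor {k : ℕ} (hG : ¬ G.HasCompleteMinor (k + 1))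
    {W : Set V} {A B : Finset V} (hA : A ∈ G.cliqueSetIn k W) (hB : B ∈ G.cliqueSetIn k W)
    (hAB : A ≠ B) :
    ∃ C S : Set V, C.Nonempty ∧ C ⊆ W ∧ S.ncard < k ∧ C ∪ S ⊂ W ∧
      G.cliqueSetIn k W ⊆ G.cliqueSetIn k (C ∪ S) ∪ G.cliqueSetIn k (W \ C) := by
  obtain ⟨b, hbB, hbA⟩ : ∃ b ∈ B, b ∉ A := Finset.not_subset.1 fun h =>
    hAB (Finset.eq_of_subset_of_card_le h (by rw [hA.1.card_eq, hB.1.card_eq])).symm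
  have hbW : b ∈ W \ ↑A := ⟨hB.2 hbB, hbA⟩
  set C := G.componentWithin (W \ ↑A) b
  have hCW : C ⊆ W \ ↑A := componentWithin_subset
  obtain ⟨a₀, ha₀A, ha₀C⟩ : ∃ a ∈ A, ∀ c ∈ C, ¬ G.Adj a c := by
    by_contra! h
    exact hG (hasCompleteMinor_succ_of_isNClique hA.1 (connected_induce_componentWithin hbW)
      (Set.disjoint_right.2 fun _ hc => (hCW hc).2) h)
  refine ⟨C, ↑A \ {a₀}, ⟨b, mem_componentWithin_self hbW⟩, fun _ hc => (hCW hc).1, ?_, ?_,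
    cliqueSetIn_subset_union fun v hv c hc hvc => ?_⟩
  · rw [Set.ncard_sdiff_singleton_of_mem ha₀A, Set.ncard_coe_finset, hA.1.card_eq]
    exact Nat.sub_lt (hA.1.card_eq ▸ Finset.card_pos.2 ⟨a₀, ha₀A⟩) one_pos
  · refine (Set.ssubset_iff_of_subset ?_).2 ⟨a₀, hA.2 ha₀A, ?_⟩
    · exact Set.union_subset (fun _ hc => (hCW hc).1) fun _ h => hA.2 h.1
    · rintro (h | h)
      exacts [(hCW h).2 ha₀A, h.2 rfl]
  · by_cases hvA : v ∈ A
    · exact Or.inr ⟨hvA, by rintro rfl; exact ha₀C c hc hvc⟩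
    · exact Or.inl (mem_componentWithin_of_adj hc ⟨hv, hvA⟩ hvc.symm)

/-- Thanks to truncated subtraction the bound also covers sets with fewer than `k` vertices, so the
induction needs no size hypothesis. -/
theorem ncard_cliqueSetIn_le [Finite V] {k : ℕ} (hG : ¬ G.HasCompleteMinor (k + 1))
    (W : Set V) : (G.cliqueSetIn k W).ncard ≤ W.ncard + 1 - k := by
  induction hm : W.ncard using Nat.strong_induction_on generalizing W with
  | _ m ih =>
  subst hm
  rcases le_or_gt (G.cliqueSetIn k W).ncard 1 with hfew | hmany
  · obtain h | ⟨A, hA⟩ := (G.cliqueSetIn k W).eq_empty_or_nonempty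
    · simp [h]
    · have := le_ncard_of_mem_cliqueSetIn hA
      omega
  obtain ⟨A, hA, B, hB, hAB⟩ := (Set.one_lt_ncard).1 hmany
  obtain ⟨C, S, hC, hCW, hS, hCSW, hsplit⟩ :=
    exists_separation_of_not_hasCompleteMinor hG hA hB hAB
  have hC₀ : 0 < C.ncard := (Set.ncard_pos).2 hC
  have hW₂ : (W \ C).ncard = W.ncard - C.ncard := Set.ncard_sdiff hCW
  have hCW' : C.ncard ≤ W.ncard := Set.ncard_le_ncard hCW
  have hCS : (C ∪ S).ncard ≤ C.ncard + S.ncard := Set.ncard_union_le C S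
  have hCSW' : (C ∪ S).ncard < W.ncard := Set.ncard_lt_ncard hCSW
  have ih₁ := ih _ hCSW' (C ∪ S) rfl
  have ih₂ := ih _ (by omega) (W \ C) rfl
  have hcount := (Set.ncard_le_ncard hsplit).trans (Set.ncard_union_le _ _)
  omega

theorem not_hasCompleteMinor_of_isIndepSet_compl {T : Finset V} (hT : G.IsIndepSet (↑T)ᶜ) :
    ¬ G.HasCompleteMinor (#T + 2) := by
  classical
  rintro ⟨B, hne, -, hdisj, hadj⟩
  have : Nonempty V := (hne 0).to_subtype.map Subtype.val
  let S : Finset (Fin (#T + 2)) := {i | ∃ v ∈ T, v ∈ B i}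
  have hS : #S ≤ #T := by
    choose! f hfT hfB using fun i (hi : i ∈ S) => (mem_filter.1 hi).2
    refine card_le_card_of_injOn f hfT fun i hi j hj hij => ?_
    by_contra hne
    exact Set.disjoint_left.1 (hdisj hne) (hfB i hi) (hij ▸ hfB j hj)
  have hSc : #Sᶜ ≤ 1 := by
    refine card_le_one.2 fun i hi j hj => ?_
    by_contra hij
    obtain ⟨u, hu, v, hv, huv⟩ := hadj hij
    simp only [S, mem_compl, mem_filter, mem_univ, true_and, not_exists, not_and] at hi hj
    exact hT (fun huT => hi u huT hu) (fun hvT => hj v hvT hv) (G.ne_of_adj huv) huv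
  have := card_add_card_compl S
  simp only [Fintype.card_fin] at this
  omega

def completeSplitGraph (T : Set V) : SimpleGraph V :=
  fromRel fun x _ => x ∈ T

@[simp]
theorem completeSplitGraph_adj {T : Set V} {x y : V} :
    (completeSplitGraph T).Adj x y ↔ x ≠ y ∧ (x ∈ T ∨ y ∈ T) := by
  simp [completeSplitGraph]

theorem isIndepSet_compl_completeSplitGraph (T : Set V) :
    (completeSplitGraph T).IsIndepSet Tᶜ :=
  fun _ hx _ hy _ h => ((completeSplitGraph_adj.1 h).2).elim hx hy

theorem isNClique_insert_completeSplitGraph [DecidableEq V] {T : Finset V} {v : V} (hv : v ∉ T) :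
    (completeSplitGraph ↑T).IsNClique (#T + 1) (insert v T) := by
  refine ⟨fun x hx y hy hxy => completeSplitGraph_adj.2 ⟨hxy, ?_⟩, card_insert_of_notMem hv⟩
  simp only [coe_insert, Set.mem_insert_iff, mem_coe] at hx hy
  obtain rfl | hx := hx
  · exact Or.inr (hy.resolve_left hxy.symm)
  · exact Or.inl hx

theorem card_compl_le_cliqueCount_completeSplitGraph [Fintype V] [DecidableEq V] (T : Finset V) :
    #Tᶜ ≤ (completeSplitGraph (T : Set V)).cliqueCount (#T + 1) := by
  rw [← Set.ncard_coe_finset]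
  refine Set.ncard_le_ncard_of_injOn (fun v => insert v T)
    (fun v hv => isNClique_insert_completeSplitGraph (mem_compl.1 hv)) fun v hv w _ h => ?_
  exact (Finset.insert_inj (mem_compl.1 hv)).1 h

theorem cliqueCount_le_of_not_hasCompleteMinor [Fintype V] {k : ℕ}
    (hG : ¬ G.HasCompleteMinor (k + 1)) : G.cliqueCount k ≤ Fintype.card V + 1 - k := by
  have := G.ncard_cliqueSetIn_le hG .univ
  rwa [cliqueSetIn_univ, Set.ncard_univ, Nat.card_eq_fintype_card] at this

end SimpleGraph

open SimpleGraph

/-- For `t ≥ 2` and `n ≥ t - 1`, the maximum number of `(t-1)`-cliques in an `n`-vertex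
`K_t`-minor-free graph equals `n - t + 2`. -/
theorem cliqueCount_pred_max_of_not_hasCompleteMinor (t n : ℕ) (ht : 2 ≤ t) (hn : t - 1 ≤ n) :
    (∀ (V : Type) [Fintype V], ∀ G : SimpleGraph V, Fintype.card V = n →
        ¬ G.HasCompleteMinor t → G.cliqueCount (t - 1) ≤ n + 2 - t) ∧
    (∃ G : SimpleGraph (Fin n), ¬ G.HasCompleteMinor t ∧
        G.cliqueCount (t - 1) = n + 2 - t) := by
  obtain ⟨k, rfl⟩ : ∃ k, t = k + 1 := ⟨t - 1, by omega⟩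
  simp only [Nat.add_sub_cancel]
  obtain ⟨T, -, hT⟩ := Finset.exists_subset_card_eq (s := (.univ : Finset (Fin n))) (n := k - 1)
    (by rw [card_univ, Fintype.card_fin]; omega)
  have hfree : ¬ (completeSplitGraph (T : Set (Fin n))).HasCompleteMinor (k + 1) := by
    have := not_hasCompleteMinor_of_isIndepSet_compl
      (isIndepSet_compl_completeSplitGraph (T : Set (Fin n)))
    rwa [hT, (by omega : k - 1 + 2 = k + 1)] at this
  refine ⟨fun V _ G hV hG => ?_, _, hfree, ?_⟩
  · have := G.cliqueCount_le_of_not_hasCompleteMinor hG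
    omega
  · have hle := cliqueCount_le_of_not_hasCompleteMinor hfree
    have hge := card_compl_le_cliqueCount_completeSplitGraph T
    rw [Finset.card_compl, hT, (by omega : k - 1 + 1 = k)] at hge
    simp only [Fintype.card_fin] at hle hge
    omega
end

section
/- For every integer ℓ ≥ 1, every ℓ-tree G with n vertices, and every integer k with 1 ≤ k ≤ ℓ+1, the number of k-cliques in G equals C(ℓ, k-1) · (n - (ℓ+1)(k-1)/k), and the total number of cliques in G (including the empty clique) equals 2^ℓ · (n - ℓ + 1). -/
/-- An `ℓ`-tree: either a copy of the complete graph `K_ℓ`, or obtained from an `ℓ`-tree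
by adding a new vertex adjacent exactly to the vertices of an `ℓ`-clique. -/
inductive SimpleGraph.IsLTree (ℓ : ℕ) : {V : Type} → SimpleGraph V → Prop
  | base {V : Type} (G : SimpleGraph V) :
      Nonempty (G ≃g (⊤ : SimpleGraph (Fin ℓ))) → SimpleGraph.IsLTree ℓ G
  | extend {V : Type} (G : SimpleGraph V) (v : V)
      (hclique : G.IsClique (G.neighborSet v)) (hcard : (G.neighborSet v).ncard = ℓ)
      (h : SimpleGraph.IsLTree ℓ (G.induce {u | u ≠ v})) : SimpleGraph.IsLTree ℓ G

namespace Set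

variable {α : Type*} [Finite α]

theorem ncard_setOf_finset_subset (A : Set α) :
    {t : Finset α | ↑t ⊆ A}.ncard = 2 ^ A.ncard := by
  rw [← ncard_powerset A]
  exact ncard_preimage_of_injective_subset_range (s := 𝒫 A) Finset.coe_injective
    fun (s : Set α) _ ↦ Finset.mem_range_coe_iff.2 (toFinite s)

theorem ncard_setOf_finset_subset_card (A : Set α) (k : ℕ) :
    {t : Finset α | ↑t ⊆ A ∧ t.card = k}.ncard = A.ncard.choose k := by
  rw [← ncard_powerset_ncard A.toFinite]
  convert ncard_preimage_of_injective_subset_range (s := {t ⊆ A | t.ncard = k})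
    Finset.coe_injective fun (s : Set α) _ ↦ Finset.mem_range_coe_iff.2 (toFinite s) using 2
  ext t
  simp

end Set

theorem Nat.card_setOf_ne_add_one {α : Type*} [Finite α] (a : α) :
    Nat.card {x | x ≠ a} + 1 = Nat.card α := by
  have := Set.ncard_compl_add_ncard ({a} : Set α)
  rwa [Set.ncard_singleton, ← Nat.card_coe_set_eq] at this

namespace SimpleGraph

variable {V : Type*}

section Peel

variable (G : SimpleGraph V) (p : ℕ → Prop) (v : V)

theorem ncard_cliques_notMem_eq_induce :
    {s : Finset V | G.IsClique (s : Set V) ∧ p s.card ∧ v ∉ s}.ncard =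
      {s : Finset {u | u ≠ v} | (G.induce {u | u ≠ v}).IsClique (s : Set _) ∧ p s.card}.ncard := by
  classical
  have hclique (t : Finset {u | u ≠ v}) :
      (G.induce {u | u ≠ v}).IsClique (t : Set _) ↔ G.IsClique (t.map (.subtype _) : Set V) := by
    simp only [isClique_induce_iff, Finset.coe_map, Function.Embedding.coe_subtype]
  rw [← (Finset.map_injective (.subtype _)).injOn.ncard_image]
  congr 1
  ext s
  simp only [Set.mem_image, Set.mem_ofPred_eq, hclique]
  constructor
  · rintro ⟨hs, hp, hv⟩
    have hs' : (s.subtype (· ≠ v)).map (.subtype _) = s :=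
      Finset.subtype_map_of_mem fun u hu (h : u = v) ↦ hv (h ▸ hu)
    exact ⟨s.subtype (· ≠ v), ⟨by rwa [hs'], by rwa [← Finset.card_map, hs']⟩, hs'⟩
  · rintro ⟨t, ⟨ht, hp⟩, rfl⟩
    refine ⟨ht, by rwa [Finset.card_map], ?_⟩
    simp

variable {G v}

theorem ncard_cliques_mem_eq_of_isClique_neighborSet (hv : G.IsClique (G.neighborSet v)) :
    {s : Finset V | G.IsClique (s : Set V) ∧ p s.card ∧ v ∈ s}.ncard =
      {t : Finset V | ↑t ⊆ G.neighborSet v ∧ p (t.card + 1)}.ncard := by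
  classical
  have hvt {t : Finset V} (ht : ↑t ⊆ G.neighborSet v) : v ∉ t := fun h ↦ G.irrefl (ht h)
  have hinj : Set.InjOn (insert v) {t : Finset V | ↑t ⊆ G.neighborSet v ∧ p (t.card + 1)} :=
    fun s hs t ht hst ↦ by
      rw [← Finset.erase_insert (hvt hs.1), hst, Finset.erase_insert (hvt ht.1)]
  rw [← hinj.ncard_image]
  congr 1
  ext s
  simp only [Set.mem_image, Set.mem_ofPred_eq]
  constructor
  · rintro ⟨hs, hp, hv⟩
    refine ⟨s.erase v, ⟨fun u hu ↦ ?_, ?_⟩, Finset.insert_erase hv⟩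
    · obtain ⟨hne, hu⟩ := Finset.mem_erase.1 hu
      exact hs hv hu hne.symm
    · rwa [Finset.card_erase_add_one hv]
  · rintro ⟨t, ⟨ht, hp⟩, rfl⟩
    refine ⟨?_, ?_, Finset.mem_insert_self v t⟩
    · rw [Finset.coe_insert, isClique_insert]
      exact ⟨hv.subset ht, fun b hb _ ↦ ht hb⟩
    · rwa [Finset.card_insert_of_notMem (hvt ht)]

theorem ncard_cliques_eq_add_of_isClique_neighborSet [Finite V]
    (hv : G.IsClique (G.neighborSet v)) :
    {s : Finset V | G.IsClique (s : Set V) ∧ p s.card}.ncard =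
      {t : Finset V | ↑t ⊆ G.neighborSet v ∧ p (t.card + 1)}.ncard +
      {s : Finset {u | u ≠ v} | (G.induce {u | u ≠ v}).IsClique (s : Set _) ∧ p s.card}.ncard := by
  rw [← ncard_cliques_mem_eq_of_isClique_neighborSet p hv, ← ncard_cliques_notMem_eq_induce,
    ← Set.ncard_inter_add_ncard_sdiff_eq_ncard {s : Finset V | G.IsClique (s : Set V) ∧ p s.card}
      {s | v ∈ s}]
  congr 2 <;> ext s <;> simp [and_assoc]

end Peel

variable {G : SimpleGraph V} {v : V}

theorem cliqueCount_succ_eq_of_isClique_neighborSet [Finite V]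
    (hv : G.IsClique (G.neighborSet v)) (k : ℕ) :
    G.cliqueCount (k + 1) =
      (G.neighborSet v).ncard.choose k + (G.induce {u | u ≠ v}).cliqueCount (k + 1) := by
  have := ncard_cliques_eq_add_of_isClique_neighborSet (· = k + 1) hv
  simpa only [cliqueCount, isNClique_iff, Nat.add_right_cancel_iff,
    Set.ncard_setOf_finset_subset_card] using this

theorem totalCliqueCount_eq_of_isClique_neighborSet [Finite V]
    (hv : G.IsClique (G.neighborSet v)) :
    G.totalCliqueCount =
      2 ^ (G.neighborSet v).ncard + (G.induce {u | u ≠ v}).totalCliqueCount := by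
  have := ncard_cliques_eq_add_of_isClique_neighborSet (fun _ ↦ True) hv
  simpa only [totalCliqueCount, and_true, Set.ncard_setOf_finset_subset] using this

theorem cliqueCount_top [Finite V] (k : ℕ) :
    (⊤ : SimpleGraph V).cliqueCount k = (Nat.card V).choose k := by
  simpa [cliqueCount, isNClique_iff] using Set.ncard_setOf_finset_subset_card (Set.univ : Set V) k

theorem totalCliqueCount_top [Finite V] :
    (⊤ : SimpleGraph V).totalCliqueCount = 2 ^ Nat.card V := by
  simpa [totalCliqueCount] using Set.ncard_setOf_finset_subset (Set.univ : Set V)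

theorem Iso.eq_top {W : Type*} (e : G ≃g (⊤ : SimpleGraph W)) : G = ⊤ := by
  ext a b
  rw [← e.map_adj_iff, top_adj, top_adj, e.injective.ne_iff]

end SimpleGraph

namespace SimpleGraph.IsLTree

variable {ℓ : ℕ} {V : Type} {G : SimpleGraph V}

theorem cliqueCount_succ_add (hG : G.IsLTree ℓ) [hV : Finite V] (k : ℕ) :
    G.cliqueCount (k + 1) + ℓ * ℓ.choose k = ℓ.choose (k + 1) + Nat.card V * ℓ.choose k := by
  induction hG generalizing hV with
  | base G e =>
    obtain ⟨e⟩ := e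
    rw [e.eq_top, cliqueCount_top, Nat.card_congr e.toEquiv, Nat.card_fin]
  | extend G v hv hcard _ ih =>
    rw [cliqueCount_succ_eq_of_isClique_neighborSet hv, hcard, ← Nat.card_setOf_ne_add_one v]
    linarith [ih]

theorem totalCliqueCount_add (hG : G.IsLTree ℓ) [hV : Finite V] :
    G.totalCliqueCount + ℓ * 2 ^ ℓ = (Nat.card V + 1) * 2 ^ ℓ := by
  induction hG generalizing hV with
  | base G e =>
    obtain ⟨e⟩ := e
    rw [e.eq_top, totalCliqueCount_top, Nat.card_congr e.toEquiv, Nat.card_fin]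
    ring
  | extend G v hv hcard _ ih =>
    rw [totalCliqueCount_eq_of_isClique_neighborSet hv, hcard, ← Nat.card_setOf_ne_add_one v]
    linarith [ih]

end SimpleGraph.IsLTree

theorem cliqueCount_of_isLTree_general (ℓ : ℕ)
    (V : Type) [Fintype V] (G : SimpleGraph V) (hG : SimpleGraph.IsLTree ℓ G)
    (n : ℕ) (hn : Fintype.card V = n) :
    (∀ k : ℕ, 1 ≤ k → k ≤ ℓ + 1 →
      (G.cliqueCount k : ℚ) =
        (ℓ.choose (k - 1) : ℚ) * ((n : ℚ) - ((ℓ : ℚ) + 1) * ((k - 1 : ℕ) : ℚ) / (k : ℚ))) ∧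
    (G.totalCliqueCount : ℚ) = 2 ^ ℓ * ((n : ℚ) - ℓ + 1) := by
  rw [← hn, Fintype.card_eq_nat_card]
  refine ⟨fun k hk₁ hk₂ ↦ ?_, ?_⟩
  · obtain ⟨j, rfl⟩ := Nat.exists_eq_add_of_le' hk₁
    have hcount : (G.cliqueCount (j + 1) : ℚ) + ℓ * ℓ.choose j =
        ℓ.choose (j + 1) + Nat.card V * ℓ.choose j := by
      exact_mod_cast hG.cliqueCount_succ_add j
    have hchoose : (ℓ.choose (j + 1) : ℚ) * (j + 1) = ℓ.choose j * (ℓ - j) := by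
      rw [← Nat.cast_sub (by omega)]
      exact_mod_cast Nat.choose_succ_right_eq ℓ j
    rw [Nat.add_sub_cancel]
    push_cast
    field_simp
    linear_combination (j + 1) * hcount + hchoose
  · have htotal : (G.totalCliqueCount : ℚ) + ℓ * 2 ^ ℓ = (Nat.card V + 1) * 2 ^ ℓ := by
      exact_mod_cast hG.totalCliqueCount_add
    linear_combination htotal

/-- For `ℓ ≥ 1`, every `ℓ`-tree on `n` vertices has exactly
`C(ℓ, k-1) * (n - (ℓ+1)(k-1)/k)` cliques of size `k` for every `1 ≤ k ≤ ℓ + 1`, and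
exactly `2^ℓ * (n - ℓ + 1)` cliques in total. -/
theorem cliqueCount_of_isLTree (ℓ : ℕ) (hℓ : 1 ≤ ℓ)
    (V : Type) [Fintype V] (G : SimpleGraph V) (hG : SimpleGraph.IsLTree ℓ G)
    (n : ℕ) (hn : Fintype.card V = n) :
    (∀ k : ℕ, 1 ≤ k → k ≤ ℓ + 1 →
      (G.cliqueCount k : ℚ) =
        (ℓ.choose (k - 1) : ℚ) * ((n : ℚ) - ((ℓ : ℚ) + 1) * ((k - 1 : ℕ) : ℚ) / (k : ℚ))) ∧
    (G.totalCliqueCount : ℚ) = 2 ^ ℓ * ((n : ℚ) - ℓ + 1) :=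
  cliqueCount_of_isLTree_general ℓ V G hG n hn
end

section
/- For all integers t ≥ 3, k with 1 ≤ k ≤ t-1, and n ≥ t-2, there exists an n-vertex graph with no K_t-minor containing at least C(t-2, k-1) · (n - (k-1)(t-1)/k) cliques of size k; moreover there exists an n-vertex graph (for n ≥ t-2) with no K_t-minor containing at least 2^{t-2} · (n - t + 3) cliques in total. -/
/-!
The witness is the `w`-th power of the path on `n` vertices, `w = t - 2`: two vertices are
adjacent when their labels differ by at most `w`; it is a `w`-tree. Suppose it had a `K_{w+2}`
minor and let `M` be the largest of the minima of the branch sets. Every branch set meets the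
window `[M - w, M]`: the one whose minimum is `M` trivially, any other because it has a vertex
`≤ M`, is joined to a vertex `≥ M` of that set, and a connected set of vertices cannot jump over
`w` consecutive labels. So `w + 2` disjoint sets meet a window of `w + 1` vertices.

The cliques are the vertex sets of label span at most `w`. Those with minimum `m < n - w` are
`m` together with any subset of the `w` following vertices, and all subsets of the last `w`
vertices are cliques too. This gives `(n - w) C(w, k-1) + C(w, k)` cliques of size `k`, which
equals `C(t-2, k-1) (n - (k-1)(t-1)/k)`, and `(n - w + 1) 2^w` cliques in all.
-/

open Finset

section windowFamily

variable (n w : ℕ) (P Q : Finset ℕ → Finset (Finset ℕ))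

def windowFamily : Finset (Finset ℕ) :=
  (range (n - w)).biUnion (fun m => (P (Ioc m (m + w))).image (insert m)) ∪ Q (Ico (n - w) n)

variable {n w P Q}

lemma mem_windowFamily {s : Finset ℕ} :
    s ∈ windowFamily n w P Q ↔
      (∃ m < n - w, ∃ A ∈ P (Ioc m (m + w)), insert m A = s) ∨ s ∈ Q (Ico (n - w) n) := by
  simp [windowFamily]

lemma subset_range_and_Icc_of_mem_windowFamily (hP : ∀ s, ∀ A ∈ P s, A ⊆ s)
    (hQ : ∀ s, ∀ A ∈ Q s, A ⊆ s) {s : Finset ℕ} (hs : s ∈ windowFamily n w P Q) :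
    s ⊆ range n ∧ ∃ m, s ⊆ Icc m (m + w) := by
  rcases mem_windowFamily.mp hs with ⟨m, hm, A, hA, rfl⟩ | hs
  · have hA := hP _ _ hA
    have : insert m A ⊆ Icc m (m + w) :=
      insert_subset (by simp) (hA.trans Ioc_subset_Icc_self)
    exact ⟨this.trans fun x hx => by simp only [mem_Icc, mem_range] at hx ⊢; omega, m, this⟩
  · have hs := hQ _ _ hs
    exact ⟨hs.trans fun x hx => by simp only [mem_Ico, mem_range] at hx ⊢; omega,
      n - w, hs.trans fun x hx => by simp only [mem_Ico, mem_Icc] at hx ⊢; omega⟩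

lemma card_windowFamily (hP : ∀ s, ∀ A ∈ P s, A ⊆ s) (hQ : ∀ s, ∀ A ∈ Q s, A ⊆ s) :
    (windowFamily n w P Q).card =
      ∑ m ∈ range (n - w), (P (Ioc m (m + w))).card + (Q (Ico (n - w) n)).card := by
  have hsub : ∀ {m A}, A ∈ P (Ioc m (m + w)) → A ⊆ Ioc m (m + w) :=
    fun hA => hP _ _ hA
  have hnotMem : ∀ {m A}, A ∈ P (Ioc m (m + w)) → m ∉ A :=
    fun hA hm => by simpa using hsub hA hm
  rw [windowFamily, card_union_of_disjoint, card_biUnion]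
  · refine congrArg (· + _) (sum_congr rfl fun m _ => card_image_of_injOn ?_)
    intro A hA B hB hAB
    rw [← erase_insert (hnotMem hA), ← erase_insert (hnotMem hB)]
    exact congrArg (·.erase m) hAB
  · intro m _ m' _ hne
    simp only [Function.onFun, disjoint_left, mem_image]
    rintro _ ⟨A, hA, rfl⟩ ⟨B, hB, hAB⟩
    have h₁ : m' ∈ insert m A := hAB ▸ mem_insert_self m' B
    have h₂ : m ∈ insert m' B := hAB.symm ▸ mem_insert_self m A
    rcases mem_insert.mp h₁ with h | h
    · exact hne h.symm
    rcases mem_insert.mp h₂ with h' | h'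
    · exact hne h'
    have := mem_Ioc.mp (hsub hA h)
    have := mem_Ioc.mp (hsub hB h')
    omega
  · simp only [disjoint_left, mem_biUnion, mem_image, mem_range]
    rintro _ ⟨m, hm, A, hA, rfl⟩ hQm
    have := mem_Ico.mp (hQ _ _ hQm (mem_insert_self m A))
    omega

end windowFamily

namespace SimpleGraph

def pathPower (n w : ℕ) : SimpleGraph (Fin n) where
  Adj i j := i ≠ j ∧ i.val ≤ j.val + w ∧ j.val ≤ i.val + w
  symm := ⟨fun _ _ h => ⟨h.1.symm, h.2.2, h.2.1⟩⟩
  loopless := ⟨fun _ h => h.1 rfl⟩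

namespace pathPower

variable {n w : ℕ}

lemma exists_crossing_of_walk {s : Set (Fin n)} {N : ℕ} :
    ∀ {x y : s}, ((pathPower n w).induce s).Walk x y → (x : Fin n).val < N →
      N ≤ (y : Fin n).val → ∃ z ∈ s, z.val < N ∧ N ≤ z.val + w
  | _, _, .nil, hx, hy => absurd hy (by omega)
  | x, _, .cons (v := b) hxb p, hx, hy => by
    by_cases hb : (b : Fin n).val < N
    · exact exists_crossing_of_walk p hb hy
    · exact ⟨x, x.2, hx, by have := (show (pathPower n w).Adj x b from hxb).2.2; omega⟩

lemma exists_crossing_of_preconnected {s : Set (Fin n)}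
    (hs : ((pathPower n w).induce s).Preconnected) {x y : Fin n} (hx : x ∈ s) (hy : y ∈ s)
    {N : ℕ} (hxN : x.val < N) (hNy : N ≤ y.val) : ∃ z ∈ s, z.val < N ∧ N ≤ z.val + w :=
  let ⟨p⟩ := hs ⟨x, hx⟩ ⟨y, hy⟩
  exists_crossing_of_walk p hxN hNy

variable (n w) in
theorem not_hasCompleteMinor : ¬ (pathPower n w).HasCompleteMinor (w + 2) := by
  rintro ⟨B, hne, hconn, hdisj, hadj⟩
  choose a ha hmin using fun i => (B i).exists_min_image Fin.val (B i).toFinite (hne i)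
  obtain ⟨j, hj⟩ := Finite.exists_max fun i => (a i).val
  set M := (a j).val
  have hrep : ∀ i, ∃ v ∈ B i, v.val ≤ M ∧ M ≤ v.val + w := by
    intro i
    by_cases hij : i = j
    · exact hij ▸ ⟨a j, ha j, le_rfl, by omega⟩
    obtain ⟨u, hu, v, hv, -, -, hvu⟩ := hadj hij
    have hMv := hmin j v hv
    by_cases huM : u.val ≤ M
    · exact ⟨u, hu, huM, by omega⟩
    obtain ⟨z, hz, hzM, hMz⟩ :=
      exists_crossing_of_preconnected (hconn i).preconnected (ha i) hu (N := M + 1)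
        (by have := hj i; omega) (by omega)
    exact ⟨z, hz, by omega, by omega⟩
  choose f hfB hf using hrep
  have hinj : Set.InjOn (fun i => (f i).val) (univ : Finset (Fin (w + 2))) := by
    intro i _ i' _ h
    by_contra hne
    exact Set.disjoint_left.mp (hdisj hne) (hfB i) (Fin.val_injective h ▸ hfB i')
  have := card_le_card_of_injOn (t := Icc (M - w) M) _
    (fun i _ => mem_Icc.mpr ⟨by have := (hf i).2; omega, (hf i).1⟩) hinj
  simp only [card_univ, Fintype.card_fin, Nat.card_Icc] at this
  omega

lemma isClique_of_image_val_subset_Icc {s : Finset (Fin n)} {m : ℕ}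
    (hs : s.image Fin.val ⊆ Icc m (m + w)) : (pathPower n w).IsClique (s : Set (Fin n)) := by
  intro a ha b hb hab
  have ha' := mem_Icc.mp (hs (mem_image_of_mem _ ha))
  have hb' := mem_Icc.mp (hs (mem_image_of_mem _ hb))
  exact ⟨hab, by omega, by omega⟩

lemma card_le_ncard_isClique {F : Finset (Finset ℕ)}
    (hF : ∀ s ∈ F, s ⊆ range n ∧ ∃ m, s ⊆ Icc m (m + w)) :
    F.card ≤ {s : Finset (Fin n) |
      (pathPower n w).IsClique (s : Set (Fin n)) ∧ s.image Fin.val ∈ F}.ncard := by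
  set S := {s : Finset (Fin n) |
    (pathPower n w).IsClique (s : Set (Fin n)) ∧ s.image Fin.val ∈ F}
  have hFS : (F : Set (Finset ℕ)) ⊆ image Fin.val '' S := by
    intro s hs
    obtain ⟨hsn, m, hsm⟩ := hF s hs
    have hlt : ∀ x ∈ s, x < n := fun x hx => mem_range.mp (hsn hx)
    refine ⟨s.attachFin hlt, ⟨?_, ?_⟩, image_val_attachFin hlt⟩
    · exact isClique_of_image_val_subset_Icc (m := m) (by rwa [image_val_attachFin])
    · rwa [image_val_attachFin]
  calc F.card = (F : Set (Finset ℕ)).ncard := (Set.ncard_coe_finset F).symm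
    _ ≤ (image Fin.val '' S).ncard := Set.ncard_le_ncard hFS (S.toFinite.image _)
    _ = S.ncard := Set.ncard_image_of_injective S (image_injective Fin.val_injective)

lemma le_cliqueCount (hw : w ≤ n) (j : ℕ) :
    (n - w) * w.choose j + w.choose (j + 1) ≤ (pathPower n w).cliqueCount (j + 1) := by
  have hP : ∀ i (s : Finset ℕ), ∀ A ∈ powersetCard i s, A ⊆ s :=
    fun _ _ _ hA => (mem_powersetCard.mp hA).1
  have hcard : ∀ s ∈ windowFamily n w (powersetCard j) (powersetCard (j + 1)),
      s.card = j + 1 := by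
    intro s hs
    rcases mem_windowFamily.mp hs with ⟨m, -, A, hA, rfl⟩ | hs
    · obtain ⟨hAm, rfl⟩ := mem_powersetCard.mp hA
      exact card_insert_of_notMem fun hm => by simpa using hAm hm
    · exact (mem_powersetCard.mp hs).2
  calc (n - w) * w.choose j + w.choose (j + 1)
      = (windowFamily n w (powersetCard j) (powersetCard (j + 1))).card := by
        simp [card_windowFamily (hP j) (hP (j + 1)), Nat.sub_sub_self hw]
    _ ≤ _ := card_le_ncard_isClique fun _ hs =>
        subset_range_and_Icc_of_mem_windowFamily (hP j) (hP (j + 1)) hs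
    _ ≤ _ := Set.ncard_le_ncard ?_ (Set.toFinite _)
  rintro s ⟨hs, hsF⟩
  exact ⟨hs, by rw [← hcard _ hsF, card_image_of_injective _ Fin.val_injective]⟩

lemma le_totalCliqueCount (hw : w ≤ n) :
    (n - w + 1) * 2 ^ w ≤ (pathPower n w).totalCliqueCount := by
  have hP : ∀ s : Finset ℕ, ∀ A ∈ s.powerset, A ⊆ s := fun _ _ => mem_powerset.mp
  calc (n - w + 1) * 2 ^ w = (windowFamily n w powerset powerset).card := by
        simp [card_windowFamily hP hP, Nat.sub_sub_self hw, add_mul]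
    _ ≤ _ := card_le_ncard_isClique fun _ hs => subset_range_and_Icc_of_mem_windowFamily hP hP hs
    _ ≤ _ := Set.ncard_le_ncard (fun s hs => hs.1) (Set.toFinite _)

end pathPower

end SimpleGraph

lemma Nat.cast_choose_mul_sub_div (w j : ℕ) (x : ℚ) :
    (w.choose j : ℚ) * (x - j * (w + 1) / (j + 1)) = (x - w) * w.choose j + w.choose (j + 1) := by
  rcases le_or_gt j w with hj | hj
  · have key := congrArg (Nat.cast : ℕ → ℚ) (Nat.choose_succ_right_eq w j)
    push_cast [Nat.cast_sub hj] at key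
    rw [← eq_div_iff (by positivity)] at key
    rw [key]
    field_simp
    ring
  · simp [Nat.choose_eq_zero_of_lt hj, Nat.choose_eq_zero_of_lt (hj.trans (Nat.lt_succ_self j))]

/-- Lower bounds: for `t ≥ 3`, `1 ≤ k ≤ t-1` and `n ≥ t-2` there is an `n`-vertex
`K_t`-minor-free graph with at least `C(t-2, k-1) * (n - (k-1)(t-1)/k)` cliques of size
`k`, and an `n`-vertex `K_t`-minor-free graph with at least `2^(t-2) * (n - t + 3)`
cliques in total. -/
theorem exists_not_hasCompleteMinor_many_cliques (t n : ℕ) (ht : 3 ≤ t) (hn : t - 2 ≤ n) :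
    (∀ k : ℕ, 1 ≤ k → k ≤ t - 1 →
      ∃ G : SimpleGraph (Fin n), ¬ G.HasCompleteMinor t ∧
        ((t - 2).choose (k - 1) : ℚ) *
            ((n : ℚ) - ((k - 1 : ℕ) : ℚ) * ((t - 1 : ℕ) : ℚ) / (k : ℚ)) ≤
          (G.cliqueCount k : ℚ)) ∧
    (∃ G : SimpleGraph (Fin n), ¬ G.HasCompleteMinor t ∧
        2 ^ (t - 2) * (n + 3 - t) ≤ G.totalCliqueCount) := by
  obtain ⟨w, rfl⟩ : ∃ w, t = w + 2 := ⟨t - 2, by omega⟩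
  simp only [Nat.add_sub_cancel] at hn ⊢
  refine ⟨fun k hk _ => ?_, SimpleGraph.pathPower n w,
    SimpleGraph.pathPower.not_hasCompleteMinor n w, ?_⟩
  · obtain ⟨j, rfl⟩ : ∃ j, k = j + 1 := ⟨k - 1, by omega⟩
    refine ⟨SimpleGraph.pathPower n w, SimpleGraph.pathPower.not_hasCompleteMinor n w, ?_⟩
    calc _ = (((n - w) * w.choose j + w.choose (j + 1) : ℕ) : ℚ) := by
          push_cast [Nat.cast_sub hn]
          exact Nat.cast_choose_mul_sub_div w j n
      _ ≤ _ := by exact_mod_cast SimpleGraph.pathPower.le_cliqueCount hn j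
  · calc 2 ^ w * (n + 3 - (w + 2)) = (n - w + 1) * 2 ^ w := by rw [mul_comm]; congr 1; omega
      _ ≤ _ := SimpleGraph.pathPower.le_totalCliqueCount hn
end

section
/- Let G = K_{n_1,...,n_c} be a complete c-partite graph with c ≥ 2 and n_1 ≥ ... ≥ n_c ≥ 1, let n = n_1 + ... + n_c, suppose G is balanced, i.e. floor((n+c)/2) ≤ n - n_1 + 1, let t = floor((n+c)/2) + 1, and suppose the average colour-class size n/c is at least 3. Then the total number of cliques in G, which equals (n_1+1)(n_2+1)···(n_c+1), is at most 2^{t-2} · (n - t + 3). -/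
open Finset

namespace SimpleGraph.completeMultipartiteGraph

variable {ι : Type*} {V : ι → Type*}

theorem isClique_iff {s : Set (Σ i, V i)} :
    (completeMultipartiteGraph V).IsClique s ↔ s.InjOn Sigma.fst := by
  rw [Set.injOn_iff_pairwise_ne]; rfl

variable [Fintype ι]

def cliqueOfSection (g : ∀ i, Option (V i)) : Finset (Σ i, V i) :=
  univ.sigma fun i => (g i).toFinset

@[simp]
theorem mem_cliqueOfSection {g : ∀ i, Option (V i)} {i : ι} {x : V i} :
    ⟨i, x⟩ ∈ cliqueOfSection g ↔ g i = some x := by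
  simp [cliqueOfSection]

theorem cliqueOfSection_injective : Function.Injective (cliqueOfSection (V := V)) := by
  intro g g' h
  funext i
  exact Option.ext fun x => by
    simpa only [mem_cliqueOfSection] using Iff.of_eq congr(⟨i, x⟩ ∈ $h)

theorem range_cliqueOfSection :
    Set.range (cliqueOfSection (V := V)) =
      {s : Finset (Σ i, V i) | (completeMultipartiteGraph V).IsClique (s : Set (Σ i, V i))} := by
  classical
  ext s
  simp only [Set.mem_range, Set.mem_ofPred_eq, isClique_iff]
  constructor
  · rintro ⟨g, rfl⟩ ⟨i, x⟩ hx ⟨j, y⟩ hy (rfl : i = j)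
    simp_all
  · intro hs
    refine ⟨fun i => if h : ∃ x, ⟨i, x⟩ ∈ s then some h.choose else none, ?_⟩
    ext ⟨i, x⟩
    rw [mem_cliqueOfSection]
    split_ifs with h
    · rw [Option.some_inj]
      constructor
      · rintro rfl
        exact h.choose_spec
      · exact fun hx => sigma_mk_injective (hs h.choose_spec hx rfl)
    · simpa using fun hx => h ⟨x, hx⟩

theorem totalCliqueCount_eq [∀ i, Finite (V i)] :
    (completeMultipartiteGraph V).totalCliqueCount = ∏ i, (Nat.card (V i) + 1) := by
  rw [totalCliqueCount, ← range_cliqueOfSection,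
    Set.ncard_range_of_injective cliqueOfSection_injective, Nat.card_pi]
  simp only [Finite.card_option]

end SimpleGraph.completeMultipartiteGraph

/-- `a² ≤ 2^a (9/8)^(4-a)`, with equality at `a = 3, 4`. -/
theorem sq_mul_nine_pow_le_sixteen_pow (a : ℕ) : a ^ 2 * 9 ^ a * 8 ^ 4 ≤ 16 ^ a * 9 ^ 4 := by
  rcases le_or_gt a 4 with ha | ha
  · interval_cases a <;> norm_num
  induction a, ha using Nat.le_induction with
  | base => norm_num
  | succ a ha ih =>
    have hstep : (a + 1) ^ 2 * 9 ≤ 16 * a ^ 2 := by nlinarith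
    calc (a + 1) ^ 2 * 9 ^ (a + 1) * 8 ^ 4 = (a + 1) ^ 2 * 9 * (9 ^ a * 8 ^ 4) := by ring
      _ ≤ 16 * a ^ 2 * (9 ^ a * 8 ^ 4) := by gcongr
      _ = 16 * (a ^ 2 * 9 ^ a * 8 ^ 4) := by ring
      _ ≤ 16 * (16 ^ a * 9 ^ 4) := by gcongr
      _ = 16 ^ (a + 1) * 9 ^ 4 := by ring

theorem eight_pow_mul_nine_pow_le {m k : ℕ} (h : k ≤ m) : 8 ^ m * 9 ^ k ≤ 9 ^ m * 8 ^ k := by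
  obtain ⟨d, rfl⟩ := Nat.exists_eq_add_of_le h
  calc 8 ^ (k + d) * 9 ^ k = 8 ^ d * (8 ^ k * 9 ^ k) := by ring
    _ ≤ 9 ^ d * (8 ^ k * 9 ^ k) := by gcongr; norm_num
    _ = 9 ^ (k + d) * 8 ^ k := by ring

/-- The weights `(9/8)^(4 - a i)` of `sq_mul_nine_pow_le_sixteen_pow` multiply to at most `1`
once the `a i` average at least `4`. -/
theorem Finset.prod_sq_le_two_pow_sum {ι : Type*} (s : Finset ι) (a : ι → ℕ)
    (h : 4 * #s ≤ ∑ i ∈ s, a i) : (∏ i ∈ s, a i) ^ 2 ≤ 2 ^ ∑ i ∈ s, a i := by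
  set m := ∑ i ∈ s, a i
  have hprod : (∏ i ∈ s, a i) ^ 2 * 9 ^ m * 8 ^ (4 * #s) ≤ 16 ^ m * 9 ^ (4 * #s) := by
    have := Finset.prod_le_prod' fun i (_ : i ∈ s) => sq_mul_nine_pow_le_sixteen_pow (a i)
    simpa only [prod_mul_distrib, prod_pow, prod_pow_eq_pow_sum, prod_const, ← pow_mul,
      mul_comm 4] using this
  have hweights : 16 ^ m * 9 ^ (4 * #s) ≤ 2 ^ m * 9 ^ m * 8 ^ (4 * #s) := by
    calc 16 ^ m * 9 ^ (4 * #s) = 2 ^ m * (8 ^ m * 9 ^ (4 * #s)) := by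
          rw [show (16 : ℕ) = 2 * 8 by norm_num, mul_pow, mul_assoc]
      _ ≤ 2 ^ m * (9 ^ m * 8 ^ (4 * #s)) := Nat.mul_le_mul_left _ (eight_pow_mul_nine_pow_le h)
      _ = 2 ^ m * 9 ^ m * 8 ^ (4 * #s) := by ring
  exact Nat.le_of_mul_le_mul_right (Nat.le_of_mul_le_mul_right (hprod.trans hweights)
    (by positivity)) (by positivity)

theorem two_pow_le_sq_two_pow_half_mul {s k : ℕ} (hk : 3 ≤ k) :
    2 ^ s ≤ (2 ^ (s / 2 - 1) * k) ^ 2 :=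
  calc 2 ^ s ≤ 2 ^ (2 * (s / 2 - 1) + 3) := Nat.pow_le_pow_right (by norm_num) (by omega)
    _ = (2 ^ (s / 2 - 1)) ^ 2 * 8 := by ring
    _ ≤ (2 ^ (s / 2 - 1)) ^ 2 * k ^ 2 := by gcongr; nlinarith
    _ = (2 ^ (s / 2 - 1) * k) ^ 2 := by ring

/-- A balanced complete multipartite graph `K_{n₁,…,n_c}` (with
`⌊(n+c)/2⌋ ≤ n - n₁ + 1` and `t = ⌊(n+c)/2⌋ + 1`) whose average colour-class size `n/c`
is at least 3 has at most `2^(t-2) * (n - t + 3)` cliques in total; its total number of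
cliques equals `∏ i, (nᵢ + 1)`. -/
theorem totalCliqueCount_balanced_completeMultipartite (c : ℕ)
    (f : Fin c → ℕ)
    (n : ℕ) (hn : n = ∑ i, f i)
    (t : ℕ) (ht : t = (n + c) / 2 + 1)
    (havg : (3 : ℚ) ≤ (n : ℚ) / (c : ℚ)) :
    (SimpleGraph.completeMultipartiteGraph fun i => Fin (f i)).totalCliqueCount =
      ∏ i, (f i + 1) ∧
    ∏ i, (f i + 1) ≤ 2 ^ (t - 2) * (n + 3 - t) := by
  refine ⟨by simp [SimpleGraph.completeMultipartiteGraph.totalCliqueCount_eq], ?_⟩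
  have hc : 0 < c := Nat.pos_of_ne_zero <| by rintro rfl; norm_num at havg
  have hn3c : 3 * c ≤ n := by
    rw [le_div_iff₀ (by positivity)] at havg
    exact_mod_cast havg
  have hsum : ∑ i, (f i + 1) = n + c := by simp [sum_add_distrib, hn]
  have hsq : (∏ i, (f i + 1)) ^ 2 ≤ 2 ^ (n + c) :=
    hsum ▸ prod_sq_le_two_pow_sum _ _ (by simp only [card_univ, Fintype.card_fin]; omega)
  have hbound := two_pow_le_sq_two_pow_half_mul (s := n + c) (k := n + 3 - t) (by omega)
  rw [show (n + c) / 2 - 1 = t - 2 by omega] at hbound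
  exact (Nat.pow_le_pow_iff_left two_ne_zero).1 (hsq.trans hbound)
end

section
/- For every integer c ≥ 1, the complete c-partite graph K_{c×2} on 2c vertices contains no clique of cardinality c+1, and its total number of cliques equals 3^c; consequently, writing t = floor(3c/2) + 1 and n = 2c, the maximum total number of cliques in an n-vertex K_t-minor-free graph is at least 3^c. -/
-- clique bound
lemma kc2_clique_card_le (c : ℕ) (s : Finset (Σ _ : Fin c, Fin 2))
    (hs : (Kc2 c).IsClique (s : Set _)) : s.card ≤ c := by
  classical
  have h : s.card ≤ (Finset.univ : Finset (Fin c)).card := by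
    apply Finset.card_le_card_of_injOn (fun v => v.1) (fun v _ => Finset.mem_univ _)
    intro u hu v hv huv
    by_contra hne
    exact (hs hu hv hne) huv
  simpa using h

-- clique count
lemma kc2_total (c : ℕ) : (Kc2 c).totalCliqueCount = 3 ^ c := by
  classical
  set Φ : (Fin c → Option (Fin 2)) → Finset (Σ _ : Fin c, Fin 2) :=
    fun f => Finset.univ.filter (fun v => f v.1 = some v.2) with hΦ
  have hmem : ∀ (f : Fin c → Option (Fin 2)) (i : Fin c) (j : Fin 2),
      (⟨i, j⟩ : Σ _ : Fin c, Fin 2) ∈ Φ f ↔ f i = some j := by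
    intro f i j; simp [hΦ]
  have hinj : Function.Injective Φ := by
    intro f g h
    funext i
    have key : ∀ j, f i = some j ↔ g i = some j := by
      intro j; rw [← hmem, ← hmem, h]
    rcases hf : f i with _ | j
    · rcases hg : g i with _ | j
      · rfl
      · have := (key j).mpr hg
        rw [hf] at this; exact absurd this (by simp)
    · exact ((key j).mp hf).symm
  have hrange : {s : Finset (Σ _ : Fin c, Fin 2) | (Kc2 c).IsClique (s : Set _)}
      = Set.range Φ := by
    ext s
    constructor
    · intro hs
      have hnot : ∀ i : Fin c, ¬ ((⟨i, 0⟩ : Σ _ : Fin c, Fin 2) ∈ s ∧ ⟨i, 1⟩ ∈ s) := by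
        rintro i ⟨h0, h1⟩
        have hne : (⟨i, 0⟩ : Σ _ : Fin c, Fin 2) ≠ ⟨i, 1⟩ := by simp
        exact (hs h0 h1 hne) rfl
      refine ⟨fun i => if (⟨i, 0⟩ : Σ _ : Fin c, Fin 2) ∈ s then some 0
        else if (⟨i, 1⟩ : Σ _ : Fin c, Fin 2) ∈ s then some 1 else none, ?_⟩
      ext ⟨i, j⟩
      simp only [hΦ, Finset.mem_filter, Finset.mem_univ, true_and]
      fin_cases j
      · by_cases h0 : (⟨i, 0⟩ : Σ _ : Fin c, Fin 2) ∈ s <;>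
          by_cases h1 : (⟨i, 1⟩ : Σ _ : Fin c, Fin 2) ∈ s <;>
          simp [h0, h1]
      · by_cases h0 : (⟨i, 0⟩ : Σ _ : Fin c, Fin 2) ∈ s <;>
          by_cases h1 : (⟨i, 1⟩ : Σ _ : Fin c, Fin 2) ∈ s <;>
          simp [h0, h1]
        · exact absurd ⟨h0, h1⟩ (hnot i)
    · rintro ⟨f, rfl⟩
      intro u hu v hv huv
      simp only [Finset.coe_filter, Set.mem_setOf_eq, hΦ, Finset.mem_coe,
        Finset.mem_filter, Finset.mem_univ, true_and] at hu hv
      show u.1 ≠ v.1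
      intro h1
      apply huv
      obtain ⟨i, j⟩ := u
      obtain ⟨i', j'⟩ := v
      simp only at h1
      subst h1
      simp only at hu hv
      rw [hu] at hv
      injection hv with h2
      subst h2
      rfl
  rw [SimpleGraph.totalCliqueCount, hrange, ← Set.image_univ,
    Set.ncard_image_of_injective _ hinj, Set.ncard_univ, Nat.card_eq_fintype_card]
  simp [Fintype.card_fun]


lemma kc2_no_minor (c t : ℕ) (ht : 3 * c < 2 * t)
    (B : Fin t → Set (Σ _ : Fin c, Fin 2))
    (hne : ∀ i, (B i).Nonempty)
    (hdisj : Pairwise fun i j => Disjoint (B i) (B j))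
    (hadj : Pairwise fun i j => ∃ u ∈ B i, ∃ v ∈ B j, (Kc2 c).Adj u v) : False := by
  classical
  let Bf : Fin t → Finset (Σ _ : Fin c, Fin 2) := fun i => (B i).toFinset
  have hdisjf : ∀ i ∈ Finset.univ, ∀ j ∈ Finset.univ, i ≠ j → Disjoint (Bf i) (Bf j) := by
    intro i _ j _ hij
    simpa [Bf, Set.disjoint_toFinset] using hdisj hij
  have hsum : ∑ i, (Bf i).card ≤ 2 * c := by
    rw [← Finset.card_biUnion hdisjf]
    calc (Finset.univ.biUnion Bf).card
        ≤ Fintype.card (Σ _ : Fin c, Fin 2) := Finset.card_le_univ _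
      _ = 2 * c := by simp [mul_comm]
  let T : Finset (Fin t) := Finset.univ.filter (fun i => 2 ≤ (Bf i).card)
  have hcard1 : ∀ i, 1 ≤ (Bf i).card := by
    intro i
    exact Finset.card_pos.mpr (by simpa [Bf, Set.toFinset_nonempty] using hne i)
  have hTle : T.card ≤ t := by
    simpa using Finset.card_le_card (Finset.subset_univ T)
  have hT : t + T.card ≤ 2 * c := by
    have h2 : ∑ i : Fin t, (if i ∈ T then 2 else 1) = t + T.card := by
      have heq : ∀ i : Fin t, (if i ∈ T then 2 else 1) = 1 + (if i ∈ T then 1 else 0) := by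
        intro i; split <;> rfl
      simp only [heq, Finset.sum_add_distrib, Finset.sum_const, Finset.card_univ,
        Fintype.card_fin, smul_eq_mul, mul_one, Finset.sum_ite_mem,
        Finset.univ_inter]
    have h1 : ∑ i : Fin t, (if i ∈ T then 2 else 1) ≤ ∑ i, (Bf i).card := by
      apply Finset.sum_le_sum
      intro i _
      by_cases hi : i ∈ T
      · simp only [hi, if_true]
        exact (Finset.mem_filter.mp hi).2
      · simp only [hi, if_false]
        exact hcard1 i
    omega
  choose b hb using hne
  have hbinj : Function.Injective b := by
    intro i j h
    by_contra hij
    exact Set.disjoint_left.mp (hdisj hij) (hb i) (h ▸ hb j)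
  have hsingle : ∀ i ∉ T, ∀ x ∈ B i, x = b i := by
    intro i hiT x hx
    have hle : (Bf i).card ≤ 1 := by
      by_contra h
      exact hiT (Finset.mem_filter.mpr ⟨Finset.mem_univ _, by omega⟩)
    exact Finset.card_le_one.mp hle x (by simpa [Bf] using hx) (b i) (by simpa [Bf] using hb i)
  let s : Finset (Σ _ : Fin c, Fin 2) := (Finset.univ \ T).image b
  have hsclique : (Kc2 c).IsClique (s : Set _) := by
    intro u hu v hv huv
    simp only [s, Finset.coe_image, Set.mem_image, Finset.mem_coe, Finset.mem_sdiff,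
      Finset.mem_univ, true_and] at hu hv
    obtain ⟨i, hi, rfl⟩ := hu
    obtain ⟨j, hj, rfl⟩ := hv
    have hij : i ≠ j := fun h => huv (by rw [h])
    obtain ⟨x, hx, y, hy, hxy⟩ := hadj hij
    rw [hsingle i hi x hx, hsingle j hj y hy] at hxy
    exact hxy
  have hscard : s.card = t - T.card := by
    rw [Finset.card_image_of_injective _ hbinj, Finset.card_sdiff_of_subset (Finset.subset_univ T)]
    simp
  have := kc2_clique_card_le c s hsclique
  omega

lemma comap_total {W V : Type*} (e : W ≃ V) (G : SimpleGraph V) :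
    (G.comap e).totalCliqueCount = G.totalCliqueCount := by
  classical
  have hinj : Function.Injective (fun s : Finset W => s.map e.toEmbedding) :=
    fun s t h => Finset.map_injective _ h
  have himg : (fun s : Finset W => s.map e.toEmbedding) ''
      {s : Finset W | (G.comap e).IsClique (s : Set W)} = {s : Finset V | G.IsClique (s : Set V)} := by
    ext t
    constructor
    · rintro ⟨s, hs, rfl⟩
      intro u hu v hv huv
      simp only [Finset.coe_map, Set.mem_image, Finset.mem_coe] at hu hv
      obtain ⟨a, ha, rfl⟩ := hu
      obtain ⟨b, hb, rfl⟩ := hv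
      have hab : a ≠ b := fun h => huv (by rw [h])
      exact hs ha hb hab
    · intro ht
      refine ⟨t.map e.symm.toEmbedding, ?_, ?_⟩
      · intro u hu v hv huv
        simp only [Finset.coe_map, Set.mem_image, Finset.mem_coe] at hu hv
        obtain ⟨a, ha, rfl⟩ := hu
        obtain ⟨b, hb, rfl⟩ := hv
        have hab : a ≠ b := fun h => huv (by rw [h])
        have h2 := ht ha hb hab
        show G.Adj (e (e.symm a)) (e (e.symm b))
        simpa using h2
      · show Finset.map e.toEmbedding (Finset.map e.symm.toEmbedding t) = t
        rw [Finset.map_map]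
        ext x
        simp
  rw [SimpleGraph.totalCliqueCount, SimpleGraph.totalCliqueCount, ← himg,
    Set.ncard_image_of_injective _ hinj]

/-- For `c ≥ 1`, `K_{c×2}` (on `2c` vertices) has no clique of cardinality `c + 1` and
exactly `3^c` cliques in total; hence for `t = ⌊3c/2⌋ + 1` and `n = 2c` there is an
`n`-vertex `K_t`-minor-free graph with at least `3^c` cliques. -/
theorem Kc2_cliqueFree_totalCliqueCount (c : ℕ) (hc : 1 ≤ c) :
    (Kc2 c).CliqueFree (c + 1) ∧
    (Kc2 c).totalCliqueCount = 3 ^ c ∧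
    ∃ G : SimpleGraph (Fin (2 * c)),
      ¬ G.HasCompleteMinor (3 * c / 2 + 1) ∧ 3 ^ c ≤ G.totalCliqueCount := by
  refine ⟨SimpleGraph.cliqueFree_completeMultipartiteGraph _
      (by simp), kc2_total c, ?_⟩
  have e : Fin (2 * c) ≃ (Σ _ : Fin c, Fin 2) :=
    Fintype.equivOfCardEq (by simp [mul_comm])
  refine ⟨(Kc2 c).comap e, ?_, ?_⟩
  · rintro ⟨B, hne, -, hdisj, hadj⟩
    apply kc2_no_minor c (3 * c / 2 + 1) (by omega) (fun i => e '' B i)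
      (fun i => (hne i).image e)
    · intro i j hij
      exact Set.disjoint_image_of_injective e.injective (hdisj hij)
    · intro i j hij
      obtain ⟨u, hu, v, hv, h⟩ := hadj hij
      exact ⟨e u, ⟨u, hu, rfl⟩, e v, ⟨v, hv, rfl⟩, h⟩
  · rw [comap_total]
    exact (kc2_total c).ge
end
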